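/- arXiv:math/0407516 — 7 statements merged into one kernel-verified Lean document; each statement's English description precedes it below -/
import Mathlib

section
/- Let R = ⋃_{i≥0} F^i R be a filtered ring, let r ∈ R, and let I be a subset of R, with rI given the induced filtration F^n(rI) = rI ∩ F^n R. If the principal symbol σ(r) is a regular element (non zero-divisor) of gr_F R, then gr_F(rI) = σ(r)·gr_F(I) as subsets of gr_F R. -/
/-- `Fprev F n` is the previous step `F^{n-1}` of the filtration, with `F^{-1} = 0`. -/
def Fprev {R : Type*} [AddCommGroup R] (F : ℕ → AddSubgroup R) : ℕ → AddSubgroup R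
  | 0 => ⊥
  | n + 1 => F n

/-- let `R = ⋃ F^i R` be a filtered ring, `r ∈ R` of order exactly `s`
whose principal symbol `σ(r)` is regular in `gr_F R`, and `I ⊆ R` a subset, with `rI`
given the induced filtration. Then `gr_F(rI) = σ(r)·gr_F(I)` inside `gr_F R`:
the components of `gr_F(rI)` in degrees `< s` vanish, and in degree `s + m` the
component equals the set of products `σ(r)·σ_m(x)` (i.e. classes of `r*x`) with
`x ∈ I ∩ F^m R`. -/
theorem gr_smul_regular (R : Type*) [Ring R]
    (F : ℕ → AddSubgroup R)
    (hmono : Monotone F)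
    (hone : (1 : R) ∈ F 0)
    (hmul : ∀ i j : ℕ, ∀ x ∈ F i, ∀ y ∈ F j, x * y ∈ F (i + j))
    (hexh : ∀ x : R, ∃ n, x ∈ F n)
    (r : R) (s : ℕ) (hr : r ∈ F s) (hr' : r ∉ Fprev F s)
    (hreg : ∀ (m : ℕ) (x : R), x ∈ F m →
      ((r * x ∈ Fprev F (s + m) → x ∈ Fprev F m) ∧
       (x * r ∈ Fprev F (m + s) → x ∈ Fprev F m)))
    (I : Set R) :
    (∀ n : ℕ, n < s →
      (QuotientAddGroup.mk' (Fprev F n)) '' ({y : R | ∃ x ∈ I, y = r * x} ∩ (F n : Set R))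
        ⊆ {0}) ∧
    (∀ m : ℕ,
      (QuotientAddGroup.mk' (Fprev F (s + m))) ''
          ({y : R | ∃ x ∈ I, y = r * x} ∩ (F (s + m) : Set R)) =
        (QuotientAddGroup.mk' (Fprev F (s + m))) ''
          ((fun x => r * x) '' (I ∩ (F m : Set R)))) := by
  have key : ∀ k x, x ∈ F k → ∀ m, r * x ∈ F (s + m) → x ∈ F m := by
    intro k
    induction k with
    | zero => intro x hx m _; exact hmono (Nat.zero_le m) hx
    | succ k ih =>
      intro x hx m hrx
      rcases le_or_gt (k + 1) m with h | h
      · exact hmono h hx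
      · have hp : r * x ∈ Fprev F (s + (k + 1)) := by
          show r * x ∈ F (s + k)
          exact hmono (by omega) hrx
        exact ih x ((hreg (k + 1) x hx).1 hp) m hrx
  have key0 : ∀ k x, x ∈ F k → ∀ n, n < s → r * x ∈ F n → x = 0 := by
    intro k
    induction k with
    | zero =>
      intro x hx n hn hrx
      obtain ⟨t, rfl⟩ : ∃ t, s = t + 1 := ⟨s - 1, by omega⟩
      have hp : r * x ∈ Fprev F (t + 1 + 0) := by
        show r * x ∈ F t
        exact hmono (by omega) hrx
      have := (hreg 0 x hx).1 hp
      simpa [Fprev, AddSubgroup.mem_bot] using this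
    | succ k ih =>
      intro x hx n hn hrx
      have hp : r * x ∈ Fprev F (s + (k + 1)) := by
        show r * x ∈ F (s + k)
        exact hmono (by omega) hrx
      exact ih x ((hreg (k + 1) x hx).1 hp) n hn hrx
  constructor
  · rintro n hn y ⟨z, ⟨⟨x, hxI, rfl⟩, hz2⟩, rfl⟩
    obtain ⟨k, hk⟩ := hexh x
    have hx0 := key0 k x hk n hn hz2
    simp [hx0]
  · intro m
    ext y
    constructor
    · rintro ⟨z, ⟨⟨x, hxI, rfl⟩, hz2⟩, rfl⟩
      obtain ⟨k, hk⟩ := hexh x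
      exact ⟨r * x, ⟨x, ⟨hxI, key k x hk m hz2⟩, rfl⟩, rfl⟩
    · rintro ⟨z, ⟨x, ⟨hxI, hxm⟩, rfl⟩, rfl⟩
      exact ⟨r * x, ⟨⟨x, hxI, rfl⟩, hmul s m r hr x hxm⟩, rfl⟩
end

section
/- Let R = ⋃_{i≥0} F^i R be a filtered ring and let r ∈ F^0 R be an idempotent (r² = r). If I ⊆ R satisfies rI ⊆ I, then gr_F(rI) = σ(r)·gr_F(I) as subsets of gr_F R. -/
/-- let `R = ⋃ F^i R` be a filtered ring and `r ∈ F^0 R` an idempotent.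
If a subset `I ⊆ R` satisfies `rI ⊆ I`, then `gr_F(rI) = σ(r)·gr_F(I)` inside
`gr_F R`: in every degree `n`, the image of `rI ∩ F^n R` in `gr^n_F R` coincides with
the set of products `σ(r)·σ_n(x)` (i.e. classes of `r*x`) with `x ∈ I ∩ F^n R`. -/
theorem gr_smul_idempotent (R : Type*) [Ring R]
    (F : ℕ → AddSubgroup R)
    (hmono : Monotone F)
    (hone : (1 : R) ∈ F 0)
    (hmul : ∀ i j : ℕ, ∀ x ∈ F i, ∀ y ∈ F j, x * y ∈ F (i + j))
    (hexh : ∀ x : R, ∃ n, x ∈ F n)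
    (r : R) (hr0 : r ∈ F 0) (hidem : r * r = r)
    (I : Set R) (hrI : (fun x => r * x) '' I ⊆ I) :
    ∀ n : ℕ,
      (QuotientAddGroup.mk' (Fprev F n)) ''
          (((fun x => r * x) '' I) ∩ (F n : Set R)) =
        (QuotientAddGroup.mk' (Fprev F n)) ''
          ((fun x => r * x) '' (I ∩ (F n : Set R))) := by
  intro n
  have hs : ((fun x => r * x) '' I) ∩ (F n : Set R) =
      (fun x => r * x) '' (I ∩ (F n : Set R)) := by
    ext z
    simp only [Set.mem_inter_iff, Set.mem_image, SetLike.mem_coe]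
    constructor
    · rintro ⟨⟨x, hxI, rfl⟩, hzF⟩
      exact ⟨r * x, ⟨hrI ⟨x, hxI, rfl⟩, hzF⟩, by rw [← mul_assoc, hidem]⟩
    · rintro ⟨x, ⟨hxI, hxF⟩, rfl⟩
      exact ⟨⟨x, hxI, rfl⟩, by simpa using hmul 0 n r hr0 x hxF⟩
  rw [hs]
end

section
/- Let d be a real number with d ≥ 1, and let λ ≤ μ be partitions of n in the dominance ordering. Then m + d·n(λ) − (d−1)·n(λᵗ) ≥ m + d·n(μ) − (d−1)·n(μᵗ) for any constant m, with equality if and only if λ = μ. -/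
/-!
Summation by parts gives `n(λ) = N·|λ| − Σ_{k=1}^{N} (λ_1 + ⋯ + λ_k)` for any `N ≥ |λ|`, so for
partitions of the same size dominance `λ ≤ μ` gives `n(λ) ≥ n(μ)`, with equality only when all
partial sums agree, i.e. `λ = μ`. Transposition reverses dominance: `λᵗ_1 + ⋯ + λᵗ_k` is the size
minus `Σ_i (λ_i − k)⁺`, and since `λ` is decreasing this sum equals `Σ_{i ≤ s} (λ_i − k)` with `s`
the number of rows longer than `k`, which dominance bounds by `Σ_{i ≤ s} (μ_i − k) ≤ Σ_i (μ_i − k)⁺`.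
Hence `n(λᵗ) ≤ n(μᵗ)`, and the difference of the two weights is
`d·(n(λ) − n(μ)) + (d − 1)·(n(μᵗ) − n(λᵗ))`, a sum of two nonnegative terms.
-/

/-- The partition statistic `n(μ) = Σ_i (i-1)·μ_i`, computed as the sum of the
(0-indexed) row indices of the cells of the Young diagram. -/
def nStat (μ : YoungDiagram) : ℕ := ∑ c ∈ μ.cells, c.1

/-- Dominance ordering on Young diagrams (partitions). -/
def Dominates (lam μ : YoungDiagram) : Prop :=
  ∀ k : ℕ, ∑ i ∈ Finset.range k, lam.rowLen i ≤ ∑ i ∈ Finset.range k, μ.rowLen i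

open Finset

theorem Finset.card_range_filter_lt (m N : ℕ) : #{i ∈ range N | i < m} = min m N := by
  rw [show {i ∈ range N | i < m} = range (min m N) by ext; simp; omega, card_range]

theorem Finset.sum_range_mul_add_sum_sum_range_succ {R : Type*} [CommSemiring R] (f : ℕ → R)
    (N : ℕ) : ∑ i ∈ range N, i * f i + ∑ k ∈ range N, ∑ i ∈ range (k + 1), f i =
      N * ∑ i ∈ range N, f i := by
  induction N with
  | zero => simp
  | succ N ih =>
    calc ∑ i ∈ range (N + 1), i * f i + ∑ k ∈ range (N + 1), ∑ i ∈ range (k + 1), f i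
        = (∑ i ∈ range N, i * f i + ∑ k ∈ range N, ∑ i ∈ range (k + 1), f i) +
            (N * f N + ∑ i ∈ range (N + 1), f i) := by
          rw [sum_range_succ _ N, sum_range_succ (fun k => ∑ i ∈ range (k + 1), f i) N]
          ring
      _ = (N + 1 : ℕ) * ∑ i ∈ range (N + 1), f i := by
          rw [ih, sum_range_succ f N]
          push_cast
          ring

namespace YoungDiagram

variable (a : YoungDiagram)

theorem colLen_le_card (j : ℕ) : a.colLen j ≤ a.card := by
  rw [colLen_eq_card]
  exact card_filter_le _ _

variable {a}

theorem fst_lt_card {c : ℕ × ℕ} (hc : c ∈ a) : c.1 < a.card :=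
  (mem_iff_lt_colLen.1 (a.up_left_mem le_rfl (Nat.zero_le c.2) hc)).trans_le (a.colLen_le_card 0)

theorem card_transpose : a.transpose.card = a.card := by
  simp [YoungDiagram.card, transpose]

theorem sum_cells_fst_eq_sum_rowLen_smul {M : Type*} [AddCommMonoid M] {N : ℕ} (h : a.card ≤ N)
    (f : ℕ → M) : ∑ c ∈ a.cells, f c.1 = ∑ i ∈ range N, a.rowLen i • f i := by
  rw [← sum_fiberwise_of_maps_to' (t := range N)
    fun c hc => mem_range.2 ((fst_lt_card ((a.mem_cells c).1 hc)).trans_le h)]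
  refine sum_congr rfl fun i _ => ?_
  rw [sum_const, rowLen_eq_card]
  rfl

theorem sum_rowLen_eq_card {N : ℕ} (h : a.card ≤ N) : ∑ i ∈ range N, a.rowLen i = a.card := by
  rw [YoungDiagram.card, card_eq_sum_ones, a.sum_cells_fst_eq_sum_rowLen_smul h fun _ => 1]
  simp

theorem ext_of_sum_rowLen {b : YoungDiagram}
    (h : ∀ k, ∑ i ∈ range k, a.rowLen i = ∑ i ∈ range k, b.rowLen i) : a = b := by
  have hrow (i : ℕ) : a.rowLen i = b.rowLen i := by
    simpa [sum_range_succ, h i] using h (i + 1)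
  ext ⟨i, j⟩
  simp only [mem_cells, mem_iff_lt_rowLen, hrow]

theorem colLen_eq_sum_ite {N : ℕ} (h : a.card ≤ N) (j : ℕ) :
    a.colLen j = ∑ i ∈ range N, if (i, j) ∈ a then 1 else 0 := by
  simp_rw [mem_iff_lt_colLen, sum_boole, card_range_filter_lt, Nat.cast_id,
    min_eq_left ((a.colLen_le_card j).trans h)]

theorem min_rowLen_eq_sum_ite (i k : ℕ) :
    min (a.rowLen i) k = ∑ j ∈ range k, if (i, j) ∈ a then 1 else 0 := by
  simp_rw [mem_iff_lt_rowLen, sum_boole, card_range_filter_lt, Nat.cast_id]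

theorem sum_colLen_add_sum_rowLen_tsub {N : ℕ} (h : a.card ≤ N) (k : ℕ) :
    ∑ j ∈ range k, a.colLen j + ∑ i ∈ range N, (a.rowLen i - k) = a.card := by
  have hcols : ∑ j ∈ range k, a.colLen j = ∑ i ∈ range N, min (a.rowLen i) k := by
    simp_rw [colLen_eq_sum_ite h, min_rowLen_eq_sum_ite]
    exact sum_comm
  rw [hcols, ← sum_add_distrib, ← a.sum_rowLen_eq_card h]
  exact sum_congr rfl fun i _ => by omega

end YoungDiagram

section

variable {a lam μ : YoungDiagram} {N : ℕ}

theorem nStat_add_sum_sum_rowLen (h : a.card ≤ N) :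
    nStat a + ∑ k ∈ range N, ∑ i ∈ range (k + 1), a.rowLen i = N * a.card := by
  have hn : nStat a = ∑ i ∈ range N, i * a.rowLen i := by
    simpa [nStat, mul_comm] using a.sum_cells_fst_eq_sum_rowLen_smul h id
  have habel := sum_range_mul_add_sum_sum_range_succ a.rowLen N
  simp only [Nat.cast_id] at habel
  rw [hn, habel, a.sum_rowLen_eq_card h]

theorem Dominates.nStat_le (hdom : Dominates lam μ) (hcard : lam.card = μ.card) :
    nStat μ ≤ nStat lam := by
  have hlam := nStat_add_sum_sum_rowLen (a := lam) le_rfl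
  have hμ := nStat_add_sum_sum_rowLen (a := μ) hcard.ge
  have := sum_le_sum fun k (_ : k ∈ range lam.card) => hdom (k + 1)
  rw [← hcard] at hμ
  omega

theorem Dominates.eq_of_nStat_eq (hdom : Dominates lam μ) (hcard : lam.card = μ.card)
    (h : nStat lam = nStat μ) : lam = μ := by
  have hlam := nStat_add_sum_sum_rowLen (a := lam) le_rfl
  have hμ := nStat_add_sum_sum_rowLen (a := μ) hcard.ge
  rw [← hcard] at hμ
  have hpartial := (sum_eq_sum_iff_of_le fun k (_ : k ∈ range lam.card) => hdom (k + 1)).1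
    (by omega)
  refine YoungDiagram.ext_of_sum_rowLen fun k => ?_
  rcases k with _ | k
  · simp
  by_cases hk : k < lam.card
  · exact hpartial k (mem_range.2 hk)
  · rw [lam.sum_rowLen_eq_card (by omega), μ.sum_rowLen_eq_card (by omega), hcard]

theorem Dominates.sum_rowLen_tsub_le (hdom : Dominates lam μ) (h : lam.card ≤ N) (k : ℕ) :
    ∑ i ∈ range N, (lam.rowLen i - k) ≤ ∑ i ∈ range N, (μ.rowLen i - k) := by
  set s := lam.colLen k
  have hs : s ≤ N := (lam.colLen_le_card k).trans h
  have hlong (i : ℕ) : i < s ↔ k < lam.rowLen i := by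
    rw [← YoungDiagram.mem_iff_lt_colLen, YoungDiagram.mem_iff_lt_rowLen]
  calc ∑ i ∈ range N, (lam.rowLen i - k)
      = ∑ i ∈ range s, (lam.rowLen i - k) := by
        rw [← sum_range_add_sum_Ico _ hs, sum_eq_zero (s := Ico s N) fun i hi => ?_, add_zero]
        have := (hlong i).not.1 (mem_Ico.1 hi).1.not_gt
        omega
    _ = ∑ i ∈ range s, lam.rowLen i - s * k := by
        rw [sum_tsub_distrib _ fun i hi => ((hlong i).1 (mem_range.1 hi)).le]
        simp
    _ ≤ ∑ i ∈ range s, μ.rowLen i - s * k := Nat.sub_le_sub_right (hdom s) _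
    _ ≤ ∑ i ∈ range s, (μ.rowLen i - k) := by
        rw [tsub_le_iff_right]
        calc ∑ i ∈ range s, μ.rowLen i ≤ ∑ i ∈ range s, (μ.rowLen i - k + k) :=
              sum_le_sum fun i _ => le_tsub_add
          _ = ∑ i ∈ range s, (μ.rowLen i - k) + s * k := by simp [sum_add_distrib]
    _ ≤ ∑ i ∈ range N, (μ.rowLen i - k) := sum_le_sum_of_subset (range_subset_range.2 hs)

theorem Dominates.transpose (hdom : Dominates lam μ) (hcard : lam.card = μ.card) :
    Dominates μ.transpose lam.transpose := by
  intro k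
  simp only [YoungDiagram.rowLen_transpose]
  have hlam := lam.sum_colLen_add_sum_rowLen_tsub le_rfl k
  have hμ := μ.sum_colLen_add_sum_rowLen_tsub hcard.ge k
  have := hdom.sum_rowLen_tsub_le le_rfl k
  omega

end

/-- for real `d ≥ 1` and partitions `λ ≤ μ` of `n` in the dominance order,
`m + d·n(λ) − (d−1)·n(λᵗ) ≥ m + d·n(μ) − (d−1)·n(μᵗ)` for any constant `m`,
with equality if and only if `λ = μ`. -/
theorem weight_inequality_shifted (n : ℕ) (d m : ℝ) (hd : 1 ≤ d)
    (lam μ : YoungDiagram)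
    (hlam : lam.cells.card = n) (hμ : μ.cells.card = n)
    (hdom : Dominates lam μ) :
    m + d * (nStat μ : ℝ) - (d - 1) * (nStat μ.transpose : ℝ) ≤
      m + d * (nStat lam : ℝ) - (d - 1) * (nStat lam.transpose : ℝ) ∧
    (m + d * (nStat lam : ℝ) - (d - 1) * (nStat lam.transpose : ℝ) =
      m + d * (nStat μ : ℝ) - (d - 1) * (nStat μ.transpose : ℝ) ↔ lam = μ) := by
  have hcard : lam.card = μ.card := hlam.trans hμ.symm
  have hrows : (nStat μ : ℝ) ≤ nStat lam := by exact_mod_cast hdom.nStat_le hcard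
  have hcols : (nStat lam.transpose : ℝ) ≤ nStat μ.transpose := by
    have hcardT : μ.transpose.card = lam.transpose.card := by
      rw [YoungDiagram.card_transpose, YoungDiagram.card_transpose, hcard]
    exact_mod_cast (hdom.transpose hcard).nStat_le hcardT
  have hrows' : 0 ≤ d * (nStat lam - nStat μ : ℝ) :=
    mul_nonneg (by linarith) (sub_nonneg.2 hrows)
  have hcols' : 0 ≤ (d - 1) * (nStat μ.transpose - nStat lam.transpose : ℝ) :=
    mul_nonneg (sub_nonneg.2 hd) (sub_nonneg.2 hcols)
  refine ⟨by linarith, fun heq => hdom.eq_of_nStat_eq hcard ?_, fun h => h ▸ rfl⟩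
  have hzero : d * (nStat lam - nStat μ : ℝ) = 0 := by linarith
  have hne : d ≠ 0 := (zero_lt_one.trans_le hd).ne'
  exact_mod_cast sub_eq_zero.1 ((mul_eq_zero.1 hzero).resolve_left hne)
end

section
/- Let c ≥ 0 be real and λ ≤ μ partitions of n in the dominance ordering. Then m + c(n(λ) − n(λᵗ)) + n(λ) ≥ m + c(n(μ) − n(μᵗ)) + n(μ), with equality if and only if λ = μ. -/
/-!
If `λ ⊴ μ` have the same size then `n(λ) ≥ n(μ)`, because by Abel summation
`n(λ) = Σ_{k<N} (|λ| - (λ₁ + ⋯ + λ_{k+1}))` decreases as the partial sums grow; equality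
forces all partial sums, hence all rows, to agree. On the other side
`n(λᵗ) = Σ_i (λ_i choose 2) = Σ_K Σ_i (λ_i - (K+1))₊`, and for each threshold `K`, dominance
gives `Σ_i (λ_i - K)₊ ≤ Σ_i (μ_i - K)₊`: the left sum only runs over the first `r` rows, those
longer than `K`, where it equals `λ₁ + ⋯ + λ_r - rK`. As `c ≥ 0`, both comparisons push the
weight the same way.
-/

open Finset

theorem sum_range_mul_add_sum_partialSums (a : ℕ → ℕ) (N : ℕ) :
    ∑ i ∈ range N, i * a i + ∑ k ∈ range N, ∑ i ∈ range (k + 1), a i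
      = N * ∑ i ∈ range N, a i := by
  induction N with
  | zero => simp
  | succ N ih =>
    rw [sum_range_succ (fun i => i * a i), sum_range_succ (fun k => ∑ i ∈ range (k + 1), a i),
      sum_range_succ a N] at *
    linarith

theorem sum_range_id_eq_sum_range_tsub {r M : ℕ} (hr : r ≤ M) :
    ∑ j ∈ range r, j = ∑ K ∈ range M, (r - (K + 1)) := by
  rw [← sum_range_reflect, ← sum_range_add_sum_Ico _ hr]
  have hzero : ∑ K ∈ Ico r M, (r - (K + 1)) = 0 :=
    sum_eq_zero fun K hK => by simp only [mem_Ico] at hK; omega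
  rw [hzero, add_zero]
  exact sum_congr rfl fun j _ => by omega

section PartialSums

variable {a b : ℕ → ℕ} {N : ℕ}

theorem sum_range_mul_le_of_partialSums_le (hab : ∀ k, ∑ i ∈ range k, a i ≤ ∑ i ∈ range k, b i)
    (htot : ∑ i ∈ range N, a i = ∑ i ∈ range N, b i) :
    ∑ i ∈ range N, i * b i ≤ ∑ i ∈ range N, i * a i := by
  have ha := sum_range_mul_add_sum_partialSums a N
  have hb := sum_range_mul_add_sum_partialSums b N
  have hle := sum_le_sum fun k (_ : k ∈ range N) => hab (k + 1)
  rw [htot] at ha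
  omega

theorem eq_of_sum_range_mul_eq (hab : ∀ k, ∑ i ∈ range k, a i ≤ ∑ i ∈ range k, b i)
    (htot : ∑ i ∈ range N, a i = ∑ i ∈ range N, b i)
    (heq : ∑ i ∈ range N, i * a i = ∑ i ∈ range N, i * b i) :
    ∀ i < N, a i = b i := by
  have ha := sum_range_mul_add_sum_partialSums a N
  have hb := sum_range_mul_add_sum_partialSums b N
  have hsum : ∑ k ∈ range N, ∑ i ∈ range (k + 1), a i
      = ∑ k ∈ range N, ∑ i ∈ range (k + 1), b i := by
    rw [htot] at ha; omega
  have hsucc := (sum_eq_sum_iff_of_le fun k (_ : k ∈ range N) => hab (k + 1)).mp hsum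
  have hpartial : ∀ k ≤ N, ∑ i ∈ range k, a i = ∑ i ∈ range k, b i
    | 0, _ => by simp
    | k + 1, hk => hsucc k (mem_range.mpr hk)
  intro i hi
  have h₁ := hpartial i hi.le
  have h₂ := hpartial (i + 1) hi
  rw [sum_range_succ, sum_range_succ] at h₂
  omega

end PartialSums

namespace YoungDiagram

theorem rowLen_eq_zero_of_colLen_le {μ : YoungDiagram} {i : ℕ} (hi : μ.colLen 0 ≤ i) :
    μ.rowLen i = 0 := by
  by_contra h
  have : (i, 0) ∈ μ := mem_iff_lt_rowLen.mpr (Nat.pos_of_ne_zero h)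
  exact absurd (mem_iff_lt_colLen.mp this) (not_lt.mpr hi)

theorem ext_rowLen {lam μ : YoungDiagram} (h : ∀ i, lam.rowLen i = μ.rowLen i) : lam = μ := by
  ext ⟨i, j⟩
  simp only [mem_cells, mem_iff_lt_rowLen, h]

theorem sum_cells_eq_sum_rows {M : Type*} [AddCommMonoid M] (μ : YoungDiagram)
    (f : ℕ × ℕ → M) {N : ℕ} (hN : μ.colLen 0 ≤ N) :
    ∑ c ∈ μ.cells, f c = ∑ i ∈ range N, ∑ j ∈ range (μ.rowLen i), f (i, j) := by
  have hmaps : ∀ c ∈ μ.cells, c.1 ∈ range N := fun c hc => by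
    have : (c.1, 0) ∈ μ := μ.up_left_mem le_rfl (Nat.zero_le _) ((mem_cells c).mp hc)
    exact mem_range.mpr ((mem_iff_lt_colLen.mp this).trans_le hN)
  rw [← sum_fiberwise_of_maps_to hmaps]
  refine sum_congr rfl fun i _ => ?_
  change ∑ c ∈ μ.row i, f c = _
  rw [row_eq_prod, sum_product, sum_singleton]

theorem card_cells_eq_sum_rowLen (μ : YoungDiagram) {N : ℕ} (hN : μ.colLen 0 ≤ N) :
    μ.cells.card = ∑ i ∈ range N, μ.rowLen i := by
  rw [card_eq_sum_ones, sum_cells_eq_sum_rows μ _ hN]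
  simp

end YoungDiagram

open YoungDiagram

theorem nStat_eq_sum_mul_rowLen (μ : YoungDiagram) {N : ℕ} (hN : μ.colLen 0 ≤ N) :
    nStat μ = ∑ i ∈ range N, i * μ.rowLen i := by
  rw [nStat, sum_cells_eq_sum_rows μ _ hN]
  simp [mul_comm]

theorem nStat_transpose_eq_sum_rows (μ : YoungDiagram) {N : ℕ} (hN : μ.colLen 0 ≤ N) :
    nStat μ.transpose = ∑ i ∈ range N, ∑ j ∈ range (μ.rowLen i), j := by
  rw [← sum_cells_eq_sum_rows μ Prod.snd hN]
  exact sum_map _ _ _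

namespace Dominates

variable {lam μ : YoungDiagram}

theorem sum_rowLen_tsub_le_s10 (hdom : Dominates lam μ) (N K : ℕ) :
    ∑ i ∈ range N, (lam.rowLen i - K) ≤ ∑ i ∈ range N, (μ.rowLen i - K) := by
  have hlonger i : K < lam.rowLen i ↔ i < lam.colLen K :=
    mem_iff_lt_rowLen.symm.trans mem_iff_lt_colLen
  set r := min N (lam.colLen K)
  have hrN : range r ⊆ range N := range_subset_range.mpr (min_le_left _ _)
  have hlong : ∀ i ∈ range r, K ≤ lam.rowLen i := fun i hi =>
    ((hlonger i).mpr ((mem_range.mp hi).trans_le (min_le_right _ _))).le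
  have hshort : ∀ i ∈ range N, i ∉ range r → lam.rowLen i - K = 0 := fun i hi hir => by
    have : ¬ K < lam.rowLen i := fun h =>
      hir (mem_range.mpr (lt_min (mem_range.mp hi) ((hlonger i).mp h)))
    omega
  calc ∑ i ∈ range N, (lam.rowLen i - K)
      = ∑ i ∈ range r, lam.rowLen i - r * K := by
        rw [← sum_subset hrN hshort, sum_tsub_distrib _ hlong]
        simp
    _ ≤ ∑ i ∈ range r, μ.rowLen i - r * K := Nat.sub_le_sub_right (hdom r) _
    _ ≤ ∑ i ∈ range r, (μ.rowLen i - K) := by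
        rw [tsub_le_iff_right]
        simpa [sum_add_distrib] using sum_le_sum fun i (_ : i ∈ range r) =>
          (le_tsub_add : μ.rowLen i ≤ μ.rowLen i - K + K)
    _ ≤ ∑ i ∈ range N, (μ.rowLen i - K) := sum_le_sum_of_subset hrN

theorem nStat_le_s10 (hdom : Dominates lam μ) (hcard : lam.cells.card = μ.cells.card) :
    nStat μ ≤ nStat lam := by
  have hl : lam.colLen 0 ≤ max (lam.colLen 0) (μ.colLen 0) := le_max_left _ _
  have hm : μ.colLen 0 ≤ max (lam.colLen 0) (μ.colLen 0) := le_max_right _ _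
  rw [nStat_eq_sum_mul_rowLen lam hl, nStat_eq_sum_mul_rowLen μ hm]
  refine sum_range_mul_le_of_partialSums_le hdom ?_
  rwa [← card_cells_eq_sum_rowLen lam hl, ← card_cells_eq_sum_rowLen μ hm]

theorem eq_of_nStat_eq_s10 (hdom : Dominates lam μ) (hcard : lam.cells.card = μ.cells.card)
    (heq : nStat lam = nStat μ) : lam = μ := by
  have hl : lam.colLen 0 ≤ max (lam.colLen 0) (μ.colLen 0) := le_max_left _ _
  have hm : μ.colLen 0 ≤ max (lam.colLen 0) (μ.colLen 0) := le_max_right _ _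
  rw [nStat_eq_sum_mul_rowLen lam hl, nStat_eq_sum_mul_rowLen μ hm] at heq
  rw [card_cells_eq_sum_rowLen lam hl, card_cells_eq_sum_rowLen μ hm] at hcard
  have hrows := eq_of_sum_range_mul_eq hdom hcard heq
  refine ext_rowLen fun i => ?_
  by_cases hi : i < max (lam.colLen 0) (μ.colLen 0)
  · exact hrows i hi
  · rw [rowLen_eq_zero_of_colLen_le (hl.trans (not_lt.mp hi)),
      rowLen_eq_zero_of_colLen_le (hm.trans (not_lt.mp hi))]

theorem nStat_transpose_le (hdom : Dominates lam μ) :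
    nStat lam.transpose ≤ nStat μ.transpose := by
  set N := max (lam.colLen 0) (μ.colLen 0)
  set M := max (lam.rowLen 0) (μ.rowLen 0)
  rw [nStat_transpose_eq_sum_rows lam (le_max_left _ _),
    nStat_transpose_eq_sum_rows μ (le_max_right _ _)]
  have hlam i : ∑ j ∈ range (lam.rowLen i), j = ∑ K ∈ range M, (lam.rowLen i - (K + 1)) :=
    sum_range_id_eq_sum_range_tsub ((lam.rowLen_anti 0 i (Nat.zero_le i)).trans (le_max_left _ _))
  have hμ i : ∑ j ∈ range (μ.rowLen i), j = ∑ K ∈ range M, (μ.rowLen i - (K + 1)) :=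
    sum_range_id_eq_sum_range_tsub ((μ.rowLen_anti 0 i (Nat.zero_le i)).trans (le_max_right _ _))
  simp only [hlam, hμ]
  rw [sum_comm, sum_comm (s := range N)]
  exact sum_le_sum fun K _ => hdom.sum_rowLen_tsub_le_s10 N (K + 1)

end Dominates

/-- for real `c ≥ 0` and partitions `λ ≤ μ` of `n` in the dominance order,
`m + c(n(λ) − n(λᵗ)) + n(λ) ≥ m + c(n(μ) − n(μᵗ)) + n(μ)`,
with equality if and only if `λ = μ`. -/
theorem weight_inequality_triv (n : ℕ) (c m : ℝ) (hc : 0 ≤ c)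
    (lam μ : YoungDiagram)
    (hlam : lam.cells.card = n) (hμ : μ.cells.card = n)
    (hdom : Dominates lam μ) :
    m + c * ((nStat μ : ℝ) - (nStat μ.transpose : ℝ)) + (nStat μ : ℝ) ≤
      m + c * ((nStat lam : ℝ) - (nStat lam.transpose : ℝ)) + (nStat lam : ℝ) ∧
    (m + c * ((nStat lam : ℝ) - (nStat lam.transpose : ℝ)) + (nStat lam : ℝ) =
      m + c * ((nStat μ : ℝ) - (nStat μ.transpose : ℝ)) + (nStat μ : ℝ) ↔ lam = μ) := by
  have hcard : lam.cells.card = μ.cells.card := hlam.trans hμ.symm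
  have hn : (nStat μ : ℝ) ≤ nStat lam := by exact_mod_cast hdom.nStat_le_s10 hcard
  have hnt : (nStat lam.transpose : ℝ) ≤ nStat μ.transpose := by
    exact_mod_cast hdom.nStat_transpose_le
  have hweight : c * ((nStat μ : ℝ) - nStat μ.transpose)
      ≤ c * ((nStat lam : ℝ) - nStat lam.transpose) :=
    mul_le_mul_of_nonneg_left (by linarith) hc
  refine ⟨by linarith, fun heq => hdom.eq_of_nStat_eq_s10 hcard ?_, fun h => h ▸ rfl⟩
  exact_mod_cast (show (nStat lam : ℝ) = nStat μ by linarith)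
end

section
/- Let R_0, R_1, R_2, … be rings with progenerator (R_{n+1}, R_n)-bimodules P_n, and let R_ℤ = ⊕_{i≥j≥0} R_{ij} be the associated Morita ℤ-algebra (R_{ii} = R_i, R_{ij} = P_{i−1} ⊗_{R_{i−1}} ⋯ ⊗_{R_{j+1}} P_j for i > j). If R_0 is left noetherian, then every finitely generated graded left R_ℤ-module is noetherian (its graded submodules are finitely generated). -/
/-!
For a Morita context `(P, Q, τ, σ)` acting by `P × A → B`, let `push S = R₂ · P · S` and
`pull T = {a | P · R₁ a ⊆ T}`; they form a Galois connection. If the trace of `τ` contains `1`,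
then `push (pull T) = T` for every `T ⊆ P · A`: writing `1 = Σ ± τ(pᵢ, qᵢ)`, each `τ(pᵢ, qᵢ) x`
equals `pᵢ · y` with `P · y ⊆ T`, since `q` carries `p · a` back to `σ(q, p) a`. Hence `pull`
embeds the submodules of `P · A` into those of `A`, and `P · A` is noetherian whenever `A` is.

Taking `A = Q_n` (finitely generated over `R_n`, again because the trace of `τ` contains `1`) and
`B = R_{n+1}` shows that every `R_n` is noetherian; then every `M_n`, spanned by finitely many
generators and `P_{n-1} · M_{n-1}`, is noetherian. Above the degrees of the generators
`M_{n+1} = P_n · M_n`, so the maps `pull` are order embeddings, and for a graded submodule `N` the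
pullbacks of the `N_{n₀+i}` to degree `n₀` form an increasing chain in `M_{n₀}`. Once it is
stationary, `N_{n+1} = P_n · N_n`, so `N` is generated by finitely many of its components.
-/

open Submodule

namespace MoritaZAlgebra

section Transfer

variable {R₁ R₂ P Q A B : Type*} [Ring R₁] [Ring R₂] [AddCommGroup A] [Module R₁ A]
  [AddCommGroup B] [Module R₂ B] (act : P → A →+ B)

variable (R₂) in
def push (S : Submodule R₁ A) : Submodule R₂ B :=
  span R₂ {b | ∃ p, ∃ a ∈ S, act p a = b}

theorem push_le_iff {S : Submodule R₁ A} {T : Submodule R₂ B} :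
    push R₂ act S ≤ T ↔ ∀ p, ∀ a ∈ S, act p a ∈ T := by
  simp only [push, span_le, Set.subset_def, Set.mem_ofPred_eq, SetLike.mem_coe]
  exact ⟨fun h p a ha => h _ ⟨p, a, ha, rfl⟩, fun h _ ⟨p, a, ha, hb⟩ => hb ▸ h p a ha⟩

variable (R₁) in
def pull (T : Submodule R₂ B) : Submodule R₁ A where
  carrier := {a | ∀ (r : R₁) p, act p (r • a) ∈ T}
  add_mem' ha hb r p := by rw [smul_add, map_add]; exact add_mem (ha r p) (hb r p)
  zero_mem' r p := by rw [smul_zero, map_zero]; exact zero_mem T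
  smul_mem' s a ha r p := by rw [smul_smul]; exact ha (r * s) p

theorem gc_push_pull : GaloisConnection (push R₂ act (R₁ := R₁)) (pull R₁ act) := by
  intro S T
  rw [push_le_iff]
  refine ⟨fun h a ha r p => h p _ (S.smul_mem r ha), fun h p a ha => ?_⟩
  simpa using h ha 1 p

theorem le_of_pull_le_pull {T T' : Submodule R₂ B} (hT : push R₂ act (pull R₁ act T) = T)
    (h : pull R₁ act T ≤ pull R₁ act T') : T ≤ T' :=
  hT ▸ ((gc_push_pull act).monotone_l h).trans ((gc_push_pull act).l_u_le T')

theorem isNoetherian_push_top [IsNoetherian R₁ A]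
    (hins : ∀ T ≤ push R₂ act (⊤ : Submodule R₁ A), push R₂ act (pull R₁ act T) = T) :
    IsNoetherian R₂ (push R₂ act (⊤ : Submodule R₁ A)) := by
  set V := push R₂ act (⊤ : Submodule R₁ A)
  rw [isNoetherian_iff']
  refine (OrderEmbedding.ofMapLEIff (fun T => pull R₁ act (T.map V.subtype)) fun T T' =>
    ⟨fun h => ?_, fun h => (gc_push_pull act).monotone_u (map_mono h)⟩).wellFoundedGT
  exact (map_le_map_iff_of_injective V.injective_subtype _ _).mp
    (le_of_pull_le_pull act (hins _ (map_subtype_le _ _)) h)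

def pullEmbedding (hins : ∀ T, push R₂ act (pull R₁ act T) = T) :
    Submodule R₂ B ↪o Submodule R₁ A :=
  OrderEmbedding.ofMapLEIff (pull R₁ act)
    fun _ _ => ⟨le_of_pull_le_pull act (hins _), fun h => (gc_push_pull act).monotone_u h⟩

variable (lP : R₂ → P → P) (rP : P → R₁ → P) (rQ : Q → R₂ → Q) (τ : P → Q → R₂)
  (σ : Q → P → R₁)

theorem exists_act_eq_smul (act_l : ∀ r p a, act (lP r p) a = r • act p a)
    (act_r : ∀ p r a, act (rP p r) a = act p (r • a))
    (assocP : ∀ p q p', lP (τ p q) p' = rP p (σ q p'))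
    (tau_r : ∀ p q r, τ p (rQ q r) = τ p q * r) {x : B}
    (hx : x ∈ push R₂ act (⊤ : Submodule R₁ A)) (q : Q) :
    ∃ y, ∀ p, act p y = τ p q • x := by
  induction hx using span_induction generalizing q with
  | mem _ hx =>
    obtain ⟨p, a, -, rfl⟩ := hx
    exact ⟨σ q p • a, fun p' => by rw [← act_r, ← assocP, act_l]⟩
  | zero => exact ⟨0, fun p => by rw [map_zero, smul_zero]⟩
  | add x x' _ _ hx hx' =>
    obtain ⟨y, hy⟩ := hx q
    obtain ⟨y', hy'⟩ := hx' q
    exact ⟨y + y', fun p => by rw [map_add, hy, hy', smul_add]⟩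
  | smul r x _ hx =>
    obtain ⟨y, hy⟩ := hx (rQ q r)
    exact ⟨y, fun p => by rw [hy, tau_r, mul_smul]⟩

theorem push_pull_of_le_push_top (act_l : ∀ r p a, act (lP r p) a = r • act p a)
    (act_r : ∀ p r a, act (rP p r) a = act p (r • a))
    (assocP : ∀ p q p', lP (τ p q) p' = rP p (σ q p'))
    (tau_r : ∀ p q r, τ p (rQ q r) = τ p q * r)
    (one_mem : (1 : R₂) ∈ AddSubgroup.closure {x | ∃ p q, x = τ p q})
    {T : Submodule R₂ B} (hT : T ≤ push R₂ act (⊤ : Submodule R₁ A)) :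
    push R₂ act (pull R₁ act T) = T := by
  refine le_antisymm ((gc_push_pull act).l_u_le T) fun x hx => ?_
  -- the left ideal of those `r` with `r • x ∈ push (pull T)` contains the trace of `τ`
  let I := (push R₂ act (pull R₁ act T)).comap (LinearMap.toSpanSingleton R₂ B x)
  have trace_le : {x | ∃ p q, x = τ p q} ⊆ I := by
    rintro _ ⟨p, q, rfl⟩
    obtain ⟨y, hy⟩ := exists_act_eq_smul act lP rP rQ τ σ act_l act_r assocP tau_r (hT hx) q
    have hy_mem : y ∈ pull R₁ act T := fun r p' => by
      rw [← act_r, hy]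
      exact T.smul_mem _ hx
    have : act p y ∈ push R₂ act (pull R₁ act T) := subset_span ⟨p, y, hy_mem, rfl⟩
    simpa [I, ← hy] using this
  simpa [I] using (AddSubgroup.closure_le I.toAddSubgroup).mpr trace_le one_mem

theorem module_finite_of_trace [AddCommGroup Q] [Module R₁ Q]
    (rQ_addr : ∀ q r s, rQ q (r + s) = rQ q r + rQ q s) (rQ_one : ∀ q, rQ q 1 = q)
    (assocQ : ∀ q p q', σ q p • q' = rQ q (τ p q'))
    (one_mem : (1 : R₂) ∈ AddSubgroup.closure {x | ∃ p q, x = τ p q}) :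
    Module.Finite R₁ Q := by
  let rQ' q := AddMonoidHom.mk' (rQ q) (rQ_addr q)
  have key : ∀ r ∈ AddSubgroup.closure {x | ∃ p q, x = τ p q},
      ∃ V : Submodule R₁ Q, V.FG ∧ ∀ q, rQ' q r ∈ V := by
    intro r hr
    induction hr using AddSubgroup.closure_induction with
    | mem _ h =>
      obtain ⟨p, q', rfl⟩ := h
      refine ⟨R₁ ∙ q', fg_span_singleton q', fun q => ?_⟩
      simpa [rQ', ← assocQ] using smul_mem _ (σ q p) (mem_span_singleton_self q')
    | zero => exact ⟨⊥, fg_bot, fun q => by rw [map_zero]; exact zero_mem ⊥⟩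
    | add _ _ _ _ h h' =>
      obtain ⟨V, hV, hr⟩ := h
      obtain ⟨V', hV', hr'⟩ := h'
      exact ⟨V ⊔ V', hV.sup hV', fun q => by
        rw [map_add]; exact add_mem (mem_sup_left (hr q)) (mem_sup_right (hr' q))⟩
    | neg _ _ h =>
      obtain ⟨V, hV, hr⟩ := h
      exact ⟨V, hV, fun q => by rw [map_neg]; exact neg_mem (hr q)⟩
  obtain ⟨V, hV, h1⟩ := key 1 one_mem
  have hV_top : V = ⊤ := eq_top_iff.mpr fun q _ => by simpa [rQ', rQ_one] using h1 q
  exact ⟨hV_top ▸ hV⟩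

theorem isNoetherianRing_of_trace [AddCommGroup Q] [Module R₁ Q] [IsNoetherianRing R₁]
    (tau_addr : ∀ p q q', τ p (q + q') = τ p q + τ p q')
    (tau_l : ∀ r p q, τ (lP r p) q = r * τ p q)
    (tau_mid : ∀ p r q, τ (rP p r) q = τ p (r • q))
    (tau_r : ∀ p q r, τ p (rQ q r) = τ p q * r)
    (rQ_addr : ∀ q r s, rQ q (r + s) = rQ q r + rQ q s) (rQ_one : ∀ q, rQ q 1 = q)
    (assocP : ∀ p q p', lP (τ p q) p' = rP p (σ q p'))
    (assocQ : ∀ q p q', σ q p • q' = rQ q (τ p q'))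
    (one_mem : (1 : R₂) ∈ AddSubgroup.closure {x | ∃ p q, x = τ p q}) :
    IsNoetherianRing R₂ := by
  have := module_finite_of_trace rQ τ σ rQ_addr rQ_one assocQ one_mem
  let τ' p := AddMonoidHom.mk' (τ p) (tau_addr p)
  have htop : push R₂ τ' (⊤ : Submodule R₁ Q) = ⊤ := by
    refine (Ideal.eq_top_iff_one _).mpr
      ((AddSubgroup.closure_le (push R₂ τ' ⊤).toAddSubgroup).mpr ?_ one_mem)
    rintro _ ⟨p, q, rfl⟩
    exact subset_span ⟨p, q, trivial, rfl⟩
  rw [IsNoetherianRing, ← isNoetherian_top_iff, ← htop]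
  exact isNoetherian_push_top τ' fun T hT =>
    push_pull_of_le_push_top τ' lP rP rQ τ σ tau_l tau_mid assocP tau_r one_mem hT

end Transfer

section InverseSystem

variable {α : ℕ → Type*} [∀ n, PartialOrder (α n)]

def descend (f : ∀ n, α (n + 1) ↪o α n) : ∀ n, α n ↪o α 0
  | 0 => RelEmbedding.refl _
  | n + 1 => (f n).trans (descend f n)

theorem exists_forall_ge_eq_of_le [WellFoundedGT (α 0)] (f : ∀ n, α (n + 1) ↪o α n)
    (x : ∀ n, α n) (hx : ∀ n, x n ≤ f n (x (n + 1))) :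
    ∃ k, ∀ n ≥ k, f n (x (n + 1)) = x n := by
  have mono : Monotone fun n => descend f n (x n) :=
    monotone_nat_of_le_succ fun n => (descend f n).monotone (hx n)
  obtain ⟨k, hk⟩ := WellFoundedGT.monotone_chain_condition ⟨_, mono⟩
  exact ⟨k, fun n hn => (descend f n).injective ((hk (n + 1) (by omega)).symm.trans (hk n hn))⟩

end InverseSystem

section Graded

variable {R P M : ℕ → Type*} [∀ n, Ring (R n)] [∀ n, AddCommGroup (M n)]
  [∀ n, Module (R n) (M n)] (act : ∀ n, P n → M n →+ M (n + 1))

def IsGraded (N : ∀ n, Submodule (R n) (M n)) : Prop :=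
  ∀ n p, ∀ m ∈ N n, act n p m ∈ N (n + 1)

variable (R) in
def Generates (gens : Set (Σ n, M n)) : Prop :=
  ∀ N : ∀ n, Submodule (R n) (M n), IsGraded act N → (∀ g ∈ gens, g.2 ∈ N g.1) →
    ∀ n x, x ∈ N n

variable (R) in
def incoming : ∀ n, Submodule (R n) (M n)
  | 0 => ⊥
  | n + 1 => push (R (n + 1)) (act n) (⊤ : Submodule (R n) (M n))

theorem span_sup_incoming_eq_top (gens : Set (Σ n, M n)) (hgens : Generates R act gens) (n : ℕ) :
    span (R n) (Sigma.mk n ⁻¹' gens) ⊔ incoming R act n = ⊤ := by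
  refine eq_top_iff.mpr fun x _ => hgens
    (fun n => span (R n) (Sigma.mk n ⁻¹' gens) ⊔ incoming R act n)
    (fun n p m _ => mem_sup_right (subset_span ⟨p, m, trivial, rfl⟩))
    (fun g hg => mem_sup_left (subset_span hg)) n x

theorem isNoetherian_of_generated [∀ n, IsNoetherianRing (R n)] (gens : Finset (Σ n, M n))
    (hgens : Generates R act (gens : Set (Σ n, M n)))
    (hins : ∀ n, ∀ T ≤ incoming R act (n + 1),
      push (R (n + 1)) (act n) (pull (R n) (act n) T) = T) (n : ℕ) :
    IsNoetherian (R n) (M n) := by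
  rw [← isNoetherian_top_iff, ← span_sup_incoming_eq_top act gens hgens n]
  have := isNoetherian_of_fg_of_noetherian (span (R n) (Sigma.mk n ⁻¹' (gens : Set (Σ n, M n))))
    (fg_span (gens.finite_toSet.preimage sigma_mk_injective.injOn))
  have : IsNoetherian (R n) (incoming R act n) := by
    cases n with
    | zero => exact inferInstanceAs (IsNoetherian (R 0) (⊥ : Submodule (R 0) (M 0)))
    | succ n =>
      have := isNoetherian_of_generated gens hgens hins n
      exact isNoetherian_push_top (act n) (hins n)
  infer_instance

theorem incoming_eq_top_of_forall_ne (gens : Set (Σ n, M n)) (hgens : Generates R act gens)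
    {n : ℕ} (hn : ∀ g ∈ gens, g.1 ≠ n + 1) : incoming R act (n + 1) = ⊤ := by
  have hempty : Sigma.mk (n + 1) ⁻¹' gens = ∅ :=
    Set.eq_empty_of_forall_notMem fun x hx => hn _ hx rfl
  simpa [hempty, incoming] using span_sup_incoming_eq_top act gens hgens (n + 1)

theorem exists_forall_ge_push_eq (gens : Finset (Σ n, M n))
    (hgens : Generates R act (gens : Set (Σ n, M n)))
    (hins : ∀ n, ∀ T ≤ incoming R act (n + 1),
      push (R (n + 1)) (act n) (pull (R n) (act n) T) = T)
    (hM : ∀ n, IsNoetherian (R n) (M n)) {N : ∀ n, Submodule (R n) (M n)}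
    (hN : IsGraded act N) :
    ∃ k, ∀ n ≥ k, push (R (n + 1)) (act n) (N n) = N (n + 1) := by
  set n₀ := gens.sup Sigma.fst
  have hins_top : ∀ n ≥ n₀, ∀ T, push (R (n + 1)) (act n) (pull (R n) (act n) T) = T := by
    refine fun n hn T => hins n T (incoming_eq_top_of_forall_ne act gens hgens ?_ ▸ le_top)
    intro g hg
    have := Finset.le_sup (f := Sigma.fst) hg
    omega
  have := (isNoetherian_iff' (R := R n₀) (M := M n₀)).mp (hM n₀)
  obtain ⟨k, hk⟩ := exists_forall_ge_eq_of_le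
    (α := fun i => Submodule (R (n₀ + i)) (M (n₀ + i)))
    (fun i => pullEmbedding (act (n₀ + i)) (hins_top _ (Nat.le_add_right _ _)))
    (fun i => N (n₀ + i))
    (fun i => (gc_push_pull (act (n₀ + i))).le_u ((push_le_iff _).mpr (hN (n₀ + i))))
  refine ⟨n₀ + k, fun n hn => ?_⟩
  obtain ⟨i, rfl⟩ : ∃ i, n = n₀ + i := ⟨n - n₀, by omega⟩
  rw [← hk i (by omega)]
  exact hins_top _ (Nat.le_add_right _ _) _

theorem exists_finset_generators (hM : ∀ n, IsNoetherian (R n) (M n))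
    {N : ∀ n, Submodule (R n) (M n)} {k : ℕ}
    (hk : ∀ n ≥ k, push (R (n + 1)) (act n) (N n) = N (n + 1)) :
    ∃ gens : Finset (Σ n, M n), (∀ g ∈ gens, g.2 ∈ N g.1) ∧
      ∀ N' : ∀ n, Submodule (R n) (M n), IsGraded act N' → (∀ g ∈ gens, g.2 ∈ N' g.1) →
        ∀ n, ∀ x ∈ N n, x ∈ N' n := by
  choose s hs using fun n => (hM n).noetherian (N n)
  refine ⟨(Finset.range (k + 1)).sigma s, fun g hg => ?_, fun N' hN' hgens' n => ?_⟩
  · rw [← hs]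
    exact subset_span (Finset.mem_sigma.mp hg).2
  have low : ∀ n ≤ k, N n ≤ N' n := fun n hn => by
    rw [← hs, span_le]
    exact fun x hx => hgens' ⟨n, x⟩
      (Finset.mem_sigma.mpr ⟨Finset.mem_range.mpr (Nat.lt_succ_of_le hn), hx⟩)
  induction n with
  | zero => exact low 0 (Nat.zero_le k)
  | succ n ih =>
    by_cases hn : n + 1 ≤ k
    · exact low _ hn
    · rw [← hk n (by omega)]
      exact (push_le_iff _).mpr fun p m hm => hN' n p m (ih m hm)

end Graded

end MoritaZAlgebra

open MoritaZAlgebra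

theorem morita_Zalgebra_noetherian_general
    -- the rings R_n
    (R : ℕ → Type) [∀ n, Ring (R n)]
    -- the bimodules P_n with left R_{n+1}- and right R_n-action
    (P : ℕ → Type)
    (lP : ∀ n, R (n + 1) → P n → P n) (rP : ∀ n, P n → R n → P n)
    -- the dual bimodules Q_n with left R_n- and right R_{n+1}-action
    (Q : ℕ → Type) [∀ n, AddCommGroup (Q n)]
    (lQ : ∀ n, R n → Q n → Q n) (rQ : ∀ n, Q n → R (n + 1) → Q n)
    (lQ_addl : ∀ n (r s : R n) q, lQ n (r + s) q = lQ n r q + lQ n s q)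
    (lQ_addr : ∀ n (r : R n) (q q' : Q n), lQ n r (q + q') = lQ n r q + lQ n r q')
    (lQ_one : ∀ n q, lQ n 1 q = q)
    (lQ_mul : ∀ n (r s : R n) q, lQ n (r * s) q = lQ n r (lQ n s q))
    (rQ_addr : ∀ n (q : Q n) (r s : R (n + 1)), rQ n q (r + s) = rQ n q r + rQ n q s)
    (rQ_one : ∀ n q, rQ n q 1 = q)
    -- the Morita pairings τ : P ⊗ Q → R_{n+1} and σ : Q ⊗ P → R_n
    (tau : ∀ n, P n → Q n → R (n + 1)) (sig : ∀ n, Q n → P n → R n)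
    (tau_addr : ∀ n (p : P n) (q q' : Q n), tau n p (q + q') = tau n p q + tau n p q')
    (tau_l : ∀ n (r : R (n + 1)) p q, tau n (lP n r p) q = r * tau n p q)
    (tau_mid : ∀ n (p : P n) (r : R n) q, tau n (rP n p r) q = tau n p (lQ n r q))
    (tau_r : ∀ n (p : P n) q (r : R (n + 1)), tau n p (rQ n q r) = tau n p q * r)
    -- the Morita context associativity conditions: ⟨p,q⟩·p' = p·⟨q,p'⟩, and dually
    (assocP : ∀ n (p : P n) (q : Q n) (p' : P n),
      lP n (tau n p q) p' = rP n p (sig n q p'))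
    (assocQ : ∀ n (q : Q n) (p : P n) (q' : Q n),
      lQ n (sig n q p) q' = rQ n q (tau n p q'))
    -- the pairings are surjective traces (so each `P_n` is a progenerator)
    (tau_surj : ∀ n (r : R (n + 1)),
      r ∈ AddSubgroup.closure {x : R (n + 1) | ∃ p q, x = tau n p q})
    -- R_0 is left noetherian
    (hnoeth : IsNoetherianRing (R 0))
    -- a graded left R_ℤ-module, given by its components
    (M : ℕ → Type) [∀ n, AddCommGroup (M n)] [∀ n, Module (R n) (M n)]
    (act : ∀ n, P n → M n → M (n + 1))
    (act_addr : ∀ n (p : P n) (m m' : M n), act n p (m + m') = act n p m + act n p m')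
    (act_l : ∀ n (r : R (n + 1)) (p : P n) m, act n (lP n r p) m = r • act n p m)
    (act_r : ∀ n (p : P n) (r : R n) m, act n (rP n p r) m = act n p (r • m))
    -- which is finitely generated
    (hfg : ∃ gens : Finset (Σ n : ℕ, M n),
      ∀ N : ∀ n, Submodule (R n) (M n),
        (∀ (n : ℕ) (p : P n) (m : M n), m ∈ N n → act n p m ∈ N (n + 1)) →
        (∀ g ∈ gens, g.2 ∈ N g.1) → ∀ (n : ℕ) (x : M n), x ∈ N n) :
    -- conclusion: every graded submodule is finitely generated
    ∀ N : ∀ n, Submodule (R n) (M n),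
      (∀ (n : ℕ) (p : P n) (m : M n), m ∈ N n → act n p m ∈ N (n + 1)) →
      ∃ gens : Finset (Σ n : ℕ, M n),
        (∀ g ∈ gens, g.2 ∈ N g.1) ∧
        ∀ N' : ∀ n, Submodule (R n) (M n),
          (∀ (n : ℕ) (p : P n) (m : M n), m ∈ N' n → act n p m ∈ N' (n + 1)) →
          (∀ g ∈ gens, g.2 ∈ N' g.1) →
          ∀ (n : ℕ) (x : M n), x ∈ N n → x ∈ N' n := by
  intro N hN
  let _ : ∀ n, SMul (R n) (Q n) := fun n => ⟨lQ n⟩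
  let _ : ∀ n, Module (R n) (Q n) := fun n =>
    Module.ofMinimalAxioms (lQ_addr n) (lQ_addl n) (lQ_mul n) (lQ_one n)
  let act' n p : M n →+ M (n + 1) := AddMonoidHom.mk' (act n p) (act_addr n p)
  have hR : ∀ n, IsNoetherianRing (R n) := fun n => by
    induction n with
    | zero => exact hnoeth
    | succ n _ =>
      exact isNoetherianRing_of_trace (lP n) (rP n) (rQ n) (tau n) (sig n) (tau_addr n)
        (tau_l n) (tau_mid n) (tau_r n) (rQ_addr n) (rQ_one n) (assocP n) (assocQ n)
        (tau_surj n 1)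
  have hins : ∀ n, ∀ T ≤ incoming R act' (n + 1),
      push (R (n + 1)) (act' n) (pull (R n) (act' n) T) = T := fun n _ =>
    push_pull_of_le_push_top (act' n) (lP n) (rP n) (rQ n) (tau n) (sig n) (act_l n) (act_r n)
      (assocP n) (tau_r n) (tau_surj n 1)
  obtain ⟨gens, hgens⟩ := hfg
  have hM := isNoetherian_of_generated act' gens hgens hins
  obtain ⟨k, hk⟩ := exists_forall_ge_push_eq act' gens hgens hins hM hN
  exact exists_finset_generators act' hM hk

/-- let `R_0, R_1, …` be rings and `P_n` progenerator
`(R_{n+1}, R_n)`-bimodules (encoded, as usual, by a Morita context: a dual bimodule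
`Q_n` and two surjective balanced pairings `τ_n : P_n × Q_n → R_{n+1}` and
`σ_n : Q_n × P_n → R_n`), and let `R_ℤ = ⊕_{i≥j≥0} R_{ij}` be the associated Morita
ℤ-algebra.  A graded left `R_ℤ`-module is encoded by its components: a family of
`R_n`-modules `M_n` together with balanced bilinear actions `P_n × M_n → M_{n+1}`
(the tensor strings `R_{ij}` then act via iterated `P`-actions).  If `R_0` is left
noetherian, then every finitely generated graded left `R_ℤ`-module is noetherian:
all of its graded submodules are finitely generated. -/
theorem morita_Zalgebra_noetherian
    -- the rings R_n
    (R : ℕ → Type) [∀ n, Ring (R n)]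
    -- the bimodules P_n with left R_{n+1}- and right R_n-action
    (P : ℕ → Type) [∀ n, AddCommGroup (P n)]
    (lP : ∀ n, R (n + 1) → P n → P n) (rP : ∀ n, P n → R n → P n)
    (lP_addl : ∀ n (r s : R (n + 1)) p, lP n (r + s) p = lP n r p + lP n s p)
    (lP_addr : ∀ n (r : R (n + 1)) (p q : P n), lP n r (p + q) = lP n r p + lP n r q)
    (lP_one : ∀ n p, lP n 1 p = p)
    (lP_mul : ∀ n (r s : R (n + 1)) p, lP n (r * s) p = lP n r (lP n s p))
    (rP_addl : ∀ n (p q : P n) r, rP n (p + q) r = rP n p r + rP n q r)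
    (rP_addr : ∀ n (p : P n) (r s : R n), rP n p (r + s) = rP n p r + rP n p s)
    (rP_one : ∀ n p, rP n p 1 = p)
    (rP_mul : ∀ n (p : P n) (r s : R n), rP n p (r * s) = rP n (rP n p r) s)
    (lrP : ∀ n (r : R (n + 1)) (p : P n) (s : R n), rP n (lP n r p) s = lP n r (rP n p s))
    -- the dual bimodules Q_n with left R_n- and right R_{n+1}-action
    (Q : ℕ → Type) [∀ n, AddCommGroup (Q n)]
    (lQ : ∀ n, R n → Q n → Q n) (rQ : ∀ n, Q n → R (n + 1) → Q n)
    (lQ_addl : ∀ n (r s : R n) q, lQ n (r + s) q = lQ n r q + lQ n s q)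
    (lQ_addr : ∀ n (r : R n) (q q' : Q n), lQ n r (q + q') = lQ n r q + lQ n r q')
    (lQ_one : ∀ n q, lQ n 1 q = q)
    (lQ_mul : ∀ n (r s : R n) q, lQ n (r * s) q = lQ n r (lQ n s q))
    (rQ_addl : ∀ n (q q' : Q n) r, rQ n (q + q') r = rQ n q r + rQ n q' r)
    (rQ_addr : ∀ n (q : Q n) (r s : R (n + 1)), rQ n q (r + s) = rQ n q r + rQ n q s)
    (rQ_one : ∀ n q, rQ n q 1 = q)
    (rQ_mul : ∀ n (q : Q n) (r s : R (n + 1)), rQ n q (r * s) = rQ n (rQ n q r) s)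
    (lrQ : ∀ n (r : R n) (q : Q n) (s : R (n + 1)), rQ n (lQ n r q) s = lQ n r (rQ n q s))
    -- the Morita pairings τ : P ⊗ Q → R_{n+1} and σ : Q ⊗ P → R_n
    (tau : ∀ n, P n → Q n → R (n + 1)) (sig : ∀ n, Q n → P n → R n)
    (tau_addl : ∀ n (p p' : P n) q, tau n (p + p') q = tau n p q + tau n p' q)
    (tau_addr : ∀ n (p : P n) (q q' : Q n), tau n p (q + q') = tau n p q + tau n p q')
    (sig_addl : ∀ n (q q' : Q n) p, sig n (q + q') p = sig n q p + sig n q' p)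
    (sig_addr : ∀ n (q : Q n) (p p' : P n), sig n q (p + p') = sig n q p + sig n q p')
    (tau_l : ∀ n (r : R (n + 1)) p q, tau n (lP n r p) q = r * tau n p q)
    (tau_mid : ∀ n (p : P n) (r : R n) q, tau n (rP n p r) q = tau n p (lQ n r q))
    (tau_r : ∀ n (p : P n) q (r : R (n + 1)), tau n p (rQ n q r) = tau n p q * r)
    (sig_l : ∀ n (r : R n) q p, sig n (lQ n r q) p = r * sig n q p)
    (sig_mid : ∀ n (q : Q n) (r : R (n + 1)) p, sig n (rQ n q r) p = sig n q (lP n r p))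
    (sig_r : ∀ n (q : Q n) p (r : R n), sig n q (rP n p r) = sig n q p * r)
    -- the Morita context associativity conditions: ⟨p,q⟩·p' = p·⟨q,p'⟩, and dually
    (assocP : ∀ n (p : P n) (q : Q n) (p' : P n),
      lP n (tau n p q) p' = rP n p (sig n q p'))
    (assocQ : ∀ n (q : Q n) (p : P n) (q' : Q n),
      lQ n (sig n q p) q' = rQ n q (tau n p q'))
    -- the pairings are surjective traces (so each `P_n` is a progenerator)
    (tau_surj : ∀ n (r : R (n + 1)),
      r ∈ AddSubgroup.closure {x : R (n + 1) | ∃ p q, x = tau n p q})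
    (sig_surj : ∀ n (r : R n),
      r ∈ AddSubgroup.closure {x : R n | ∃ q p, x = sig n q p})
    -- R_0 is left noetherian
    (hnoeth : IsNoetherianRing (R 0))
    -- a graded left R_ℤ-module, given by its components
    (M : ℕ → Type) [∀ n, AddCommGroup (M n)] [∀ n, Module (R n) (M n)]
    (act : ∀ n, P n → M n → M (n + 1))
    (act_addl : ∀ n (p p' : P n) m, act n (p + p') m = act n p m + act n p' m)
    (act_addr : ∀ n (p : P n) (m m' : M n), act n p (m + m') = act n p m + act n p m')
    (act_l : ∀ n (r : R (n + 1)) (p : P n) m, act n (lP n r p) m = r • act n p m)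
    (act_r : ∀ n (p : P n) (r : R n) m, act n (rP n p r) m = act n p (r • m))
    -- which is finitely generated
    (hfg : ∃ gens : Finset (Σ n : ℕ, M n),
      ∀ N : ∀ n, Submodule (R n) (M n),
        (∀ (n : ℕ) (p : P n) (m : M n), m ∈ N n → act n p m ∈ N (n + 1)) →
        (∀ g ∈ gens, g.2 ∈ N g.1) → ∀ (n : ℕ) (x : M n), x ∈ N n) :
    -- conclusion: every graded submodule is finitely generated
    ∀ N : ∀ n, Submodule (R n) (M n),
      (∀ (n : ℕ) (p : P n) (m : M n), m ∈ N n → act n p m ∈ N (n + 1)) →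
      ∃ gens : Finset (Σ n : ℕ, M n),
        (∀ g ∈ gens, g.2 ∈ N g.1) ∧
        ∀ N' : ∀ n, Submodule (R n) (M n),
          (∀ (n : ℕ) (p : P n) (m : M n), m ∈ N' n → act n p m ∈ N' (n + 1)) →
          (∀ g ∈ gens, g.2 ∈ N' g.1) →
          ∀ (n : ℕ) (x : M n), x ∈ N n → x ∈ N' n :=
  morita_Zalgebra_noetherian_general R P lP rP Q lQ rQ lQ_addl lQ_addr lQ_one lQ_mul rQ_addr rQ_one
    tau sig tau_addr tau_l tau_mid tau_r assocP assocQ tau_surj hnoeth M act act_addr act_l act_r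
    hfg
end

section
/- Let R_ℤ = ⊕_{i≥j≥0} R_{ij} be the Morita ℤ-algebra associated to Morita equivalent rings {R_n} with progenerator bimodules {P_n}, where R_0 is noetherian. Then the functor M ↦ π(⊕_{n∈ℕ} R_{n0} ⊗_{R_0} M) induces an equivalence of categories between the category of finitely generated left R_0-modules and the quotient category R_ℤ-qgr of noetherian graded left R_ℤ-modules modulo the subcategory of bounded (finite length in each degree and zero in almost all degrees) modules. -/
/-!
Everything is built from one Morita step. For a Morita context `(X, Y, μ, ν)` between `S` and
`T`, the functor `A ↦ Y ⊗_S A` is realised as `Hom_S(X, A)`; it is an equivalence whose inverse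
is the same construction for the transposed context. Iterating it produces `Φ V`, and also pushes
each degree of a graded module down to an `R_0`-module.

The proof is driven by the curried action `Y_n → Hom(P_n, Y_{n+1})`. For `Φ V` it is bijective
in every degree. For finitely generated `Y` it is surjective above the degrees of the generators;
pushed down to `R_0` these maps form a chain of surjections out of a finitely generated module
over the noetherian ring `R_0`, so their kernels stabilise and the curried action is bijective
from some degree `n₁` on. Two modules whose curried actions are bijective from degree `n₁` on are
isomorphic in degrees `≥ n₁` once their degree-`n₁` pieces are; with `V = R_{0n₁} ⊗ Y_{n₁}` this
gives essential surjectivity. Finally, a morphism defined in high degrees into a module whose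
curried actions are all bijective descends, one degree at a time, to a graded morphism, and
graded morphisms out of `Φ V` are determined in degree `0`; this gives full faithfulness.
-/

noncomputable section

variable (R : ℕ → Type) [∀ n, Ring (R n)]
variable (P : ℕ → Type) [∀ n, AddCommGroup (P n)]
variable (lP : ∀ n, R (n + 1) → P n → P n) (rP : ∀ n, P n → R n → P n)

/-- A graded left module over the Morita ℤ-algebra `R_ℤ = ⊕_{i≥j≥0} R_{ij}`, encoded
by its components: a family of `R_n`-modules `M_n` together with balanced bilinear
actions `P_n × M_n → M_{n+1}` (the tensor strings `R_{ij}` act by iteration). -/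
structure GrMod : Type 1 where
  M : ℕ → Type
  [acg : ∀ n, AddCommGroup (M n)]
  [mod : ∀ n, Module (R n) (M n)]
  act : ∀ n, P n → M n → M (n + 1)
  act_addl : ∀ n (p p' : P n) m, act n (p + p') m = act n p m + act n p' m
  act_addr : ∀ n (p : P n) (m m' : M n), act n p (m + m') = act n p m + act n p m'
  act_l : ∀ n (r : R (n + 1)) (p : P n) m, act n (lP n r p) m = r • act n p m
  act_r : ∀ n (p : P n) (r : R n) m, act n (rP n p r) m = act n p (r • m)

attribute [instance] GrMod.acg GrMod.mod

/-- A morphism of graded `R_ℤ`-modules: a family of degree-zero `R_n`-linear maps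
commuting with the `P_n`-actions. -/
structure GrHom (X Y : GrMod R P lP rP) where
  f : ∀ n, X.M n →ₗ[R n] Y.M n
  compat : ∀ (n : ℕ) (p : P n) (m : X.M n),
    f (n + 1) (X.act n p m) = Y.act n p (f n m)

/-- A graded `R_ℤ`-module is finitely generated if finitely many homogeneous elements
generate it (no proper graded submodule contains them all). -/
def GrMod.IsFG (X : GrMod R P lP rP) : Prop :=
  ∃ gens : Finset (Σ n : ℕ, X.M n),
    ∀ N : ∀ n, Submodule (R n) (X.M n),
      (∀ (n : ℕ) (p : P n) (m : X.M n), m ∈ N n → X.act n p m ∈ N (n + 1)) →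
      (∀ g ∈ gens, g.2 ∈ N g.1) → ∀ (n : ℕ) (x : X.M n), x ∈ N n

theorem exists_sum_eq_of_mem_closure {A B C : Type*} [AddCommGroup A] [AddCommGroup C]
    (f : A → B → C) (hf : ∀ a a' b, f (a + a') b = f a b + f a' b) {c : C}
    (hc : c ∈ AddSubgroup.closure {c | ∃ a b, c = f a b}) :
    ∃ (ι : Type) (_ : Fintype ι) (a : ι → A) (b : ι → B), ∑ i, f (a i) (b i) = c := by
  induction hc using AddSubgroup.closure_induction with
  | mem c hc =>
    obtain ⟨a, b, rfl⟩ := hc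
    exact ⟨Unit, inferInstance, fun _ => a, fun _ => b, by simp⟩
  | zero => exact ⟨Empty, inferInstance, Empty.elim, Empty.elim, by simp⟩
  | add c c' _ _ ih ih' =>
    obtain ⟨ι, _, a, b, rfl⟩ := ih
    obtain ⟨ι', _, a', b', rfl⟩ := ih'
    exact ⟨ι ⊕ ι', inferInstance, Sum.elim a a', Sum.elim b b', by simp [Fintype.sum_sum_type]⟩
  | neg c _ ih =>
    obtain ⟨ι, _, a, b, rfl⟩ := ih
    refine ⟨ι, inferInstance, fun i => -a i, b, ?_⟩
    rw [← Finset.sum_neg_distrib]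
    exact Finset.sum_congr rfl fun i _ =>
      (AddMonoidHom.mk' (f · (b i)) (hf · · (b i))).map_neg (a i)

theorem exists_forall_injective_of_surjective {A : Type*} [Ring A] {M : ℕ → Type*}
    [∀ k, AddCommGroup (M k)] [∀ k, Module A (M k)] [IsNoetherian A (M 0)]
    (s : ∀ k, M k →ₗ[A] M (k + 1)) (hs : ∀ k, Function.Surjective (s k)) :
    ∃ k₀, ∀ k, k₀ ≤ k → Function.Injective (s k) := by
  let π : ∀ k, M 0 →ₗ[A] M k := fun k => Nat.rec LinearMap.id (fun k f => s k ∘ₗ f) k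
  have hπ : ∀ k, Function.Surjective (π k) := fun k => by
    induction k with
    | zero => exact Function.surjective_id
    | succ k ih => exact (hs k).comp ih
  obtain ⟨k₀, hk₀⟩ := monotone_stabilizes_iff_noetherian.2 ‹_›
    ⟨fun k => LinearMap.ker (π k), monotone_nat_of_le_succ fun k x hx => by
      simp only [LinearMap.mem_ker] at hx ⊢
      exact (congrArg (s k) hx).trans (map_zero _)⟩
  refine ⟨k₀, fun k hk => (injective_iff_map_eq_zero _).2 fun x hx => ?_⟩
  obtain ⟨w, rfl⟩ := hπ k x
  have hker : LinearMap.ker (π (k + 1)) = LinearMap.ker (π k) :=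
    (hk₀ (k + 1) (by omega)).symm.trans (hk₀ k hk)
  exact (hker ▸ hx : w ∈ LinearMap.ker (π k))

section MoritaContext

variable {S T X Y : Type*} [Ring S] [Ring T] [AddCommGroup X] [AddCommGroup Y]

structure IsBimodule (l : S → X → X) (r : X → T → X) : Prop where
  add_lsmul : ∀ s s' x, l (s + s') x = l s x + l s' x
  lsmul_add : ∀ s x x', l s (x + x') = l s x + l s x'
  one_lsmul : ∀ x, l 1 x = x
  mul_lsmul : ∀ s s' x, l (s * s') x = l s (l s' x)
  add_rsmul : ∀ x x' t, r (x + x') t = r x t + r x' t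
  rsmul_add : ∀ x t t', r x (t + t') = r x t + r x t'
  rsmul_one : ∀ x, r x 1 = x
  rsmul_mul : ∀ x t t', r x (t * t') = r (r x t) t'
  lsmul_rsmul : ∀ s x t, r (l s x) t = l s (r x t)

structure IsMoritaContext (lX : S → X → X) (rX : X → T → X) (lY : T → Y → Y)
    (rY : Y → S → Y) (μ : X → Y → S) (ν : Y → X → T) : Prop where
  bimoduleX : IsBimodule lX rX
  bimoduleY : IsBimodule lY rY
  mu_add_left : ∀ x x' y, μ (x + x') y = μ x y + μ x' y
  mu_add_right : ∀ x y y', μ x (y + y') = μ x y + μ x y'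
  nu_add_left : ∀ y y' x, ν (y + y') x = ν y x + ν y' x
  nu_add_right : ∀ y x x', ν y (x + x') = ν y x + ν y x'
  mu_lsmul : ∀ s x y, μ (lX s x) y = s * μ x y
  mu_rsmul_left : ∀ x t y, μ (rX x t) y = μ x (lY t y)
  mu_rsmul : ∀ x y s, μ x (rY y s) = μ x y * s
  nu_lsmul : ∀ t y x, ν (lY t y) x = t * ν y x
  nu_rsmul_left : ∀ y s x, ν (rY y s) x = ν y (lX s x)
  nu_rsmul : ∀ y x t, ν y (rX x t) = ν y x * t
  lsmul_mu : ∀ x y x', lX (μ x y) x' = rX x (ν y x')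
  lsmul_nu : ∀ y x y', lY (ν y x) y' = rY y (μ x y')
  mu_closure : ∀ s, s ∈ AddSubgroup.closure {s | ∃ x y, s = μ x y}
  nu_closure : ∀ t, t ∈ AddSubgroup.closure {t | ∃ y x, t = ν y x}

namespace IsBimodule

variable {l : S → X → X} {r : X → T → X}

def rsmulLeft (hX : IsBimodule l r) (x : X) : T →+ X := AddMonoidHom.mk' (r x) (hX.rsmul_add x)

def rsmulRight (hX : IsBimodule l r) (t : T) : X →+ X :=
  AddMonoidHom.mk' (r · t) (hX.add_rsmul · · t)

theorem rsmul_zero (hX : IsBimodule l r) (x : X) : r x 0 = 0 := (hX.rsmulLeft x).map_zero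

theorem rsmul_sum (hX : IsBimodule l r) {ι : Type*} (s : Finset ι) (x : X) (t : ι → T) :
    r x (∑ i ∈ s, t i) = ∑ i ∈ s, r x (t i) :=
  map_sum (hX.rsmulLeft x) t s

end IsBimodule

namespace IsMoritaContext

variable {lX : S → X → X} {rX : X → T → X} {lY : T → Y → Y} {rY : Y → S → Y}
  {μ : X → Y → S} {ν : Y → X → T}

theorem symm (h : IsMoritaContext lX rX lY rY μ ν) : IsMoritaContext lY rY lX rX ν μ :=
  ⟨h.bimoduleY, h.bimoduleX, h.nu_add_left, h.nu_add_right, h.mu_add_left, h.mu_add_right,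
    h.nu_lsmul, h.nu_rsmul_left, h.nu_rsmul, h.mu_lsmul, h.mu_rsmul_left, h.mu_rsmul,
    h.lsmul_nu, h.lsmul_mu, h.nu_closure, h.mu_closure⟩

theorem exists_sum_nu_eq_one (h : IsMoritaContext lX rX lY rY μ ν) :
    ∃ (ι : Type) (_ : Fintype ι) (y : ι → Y) (x : ι → X), ∑ i, ν (y i) (x i) = 1 :=
  exists_sum_eq_of_mem_closure ν h.nu_add_left (h.nu_closure 1)

theorem sum_lsmul_nu (h : IsMoritaContext lX rX lY rY μ ν) {ι : Type*} [Fintype ι]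
    {x : ι → X} {y : ι → Y} (hxy : ∑ i, μ (x i) (y i) = 1) (y' : Y) :
    ∑ i, lY (ν y' (x i)) (y i) = y' := by
  simp only [h.lsmul_nu, ← h.bimoduleY.rsmul_sum, hxy, h.bimoduleY.rsmul_one]

variable (h : IsMoritaContext lX rX lY rY μ ν) (A B : Type*) [AddCommGroup A] [Module S A]
  [AddCommGroup B] [Module S B]

def homSubgroup : AddSubgroup (X →+ A) where
  carrier := {φ | ∀ s x, φ (lX s x) = s • φ x}
  add_mem' hφ hψ s x := by simp [hφ s x, hψ s x, smul_add]
  zero_mem' s x := by simp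
  neg_mem' hφ s x := by simp [hφ s x]

/-- `Hom_S(X, A)`, standing for `Y ⊗_S A`; under this identification `y ⊗ a` is
`x ↦ μ x y • a` (see `tmul`). -/
def Hom (_ : IsMoritaContext lX rX lY rY μ ν) : Type _ := homSubgroup (lX := lX) A

instance : AddCommGroup (h.Hom A) := inferInstanceAs (AddCommGroup (homSubgroup (lX := lX) A))

instance : FunLike (h.Hom A) X A where
  coe φ := φ.1
  coe_injective _ _ e := Subtype.ext (DFunLike.coe_injective e)

instance : AddMonoidHomClass (h.Hom A) X A where
  map_add φ := φ.1.map_add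
  map_zero φ := φ.1.map_zero

variable {h A B}

@[ext] theorem Hom.ext {φ ψ : h.Hom A} (e : ∀ x, φ x = ψ x) : φ = ψ := DFunLike.ext _ _ e

theorem Hom.map_lsmul (φ : h.Hom A) (s : S) (x : X) : φ (lX s x) = s • φ x := φ.2 s x

@[simp] theorem Hom.add_apply (φ ψ : h.Hom A) (x : X) : (φ + ψ) x = φ x + ψ x := rfl

@[simp] theorem Hom.zero_apply (x : X) : (0 : h.Hom A) x = 0 := rfl

def evalAddHom (x : X) : h.Hom A →+ A where
  toFun φ := φ x
  map_zero' := rfl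
  map_add' _ _ := rfl

theorem Hom.sum_apply {ι : Type*} (s : Finset ι) (φ : ι → h.Hom A) (x : X) :
    (∑ i ∈ s, φ i) x = ∑ i ∈ s, φ i x :=
  map_sum (evalAddHom x) φ s

instance : SMul T (h.Hom A) where
  smul t φ := ⟨φ.1.comp (h.bimoduleX.rsmulRight t), fun s x => by
    show φ (rX (lX s x) t) = s • φ (rX x t)
    rw [h.bimoduleX.lsmul_rsmul, φ.map_lsmul]⟩

@[simp] theorem Hom.smul_apply (t : T) (φ : h.Hom A) (x : X) : (t • φ) x = φ (rX x t) := rfl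

instance : Module T (h.Hom A) where
  one_smul φ := by ext x; simp [h.bimoduleX.rsmul_one]
  mul_smul t t' φ := by ext x; simp [h.bimoduleX.rsmul_mul]
  smul_zero t := rfl
  smul_add t φ ψ := rfl
  add_smul t t' φ := by ext x; simp [h.bimoduleX.rsmul_add]
  zero_smul φ := by ext x; simp [h.bimoduleX.rsmul_zero]

def tmul (y : Y) (a : A) : h.Hom A :=
  ⟨AddMonoidHom.mk' (fun x => μ x y • a) (fun x x' => by rw [h.mu_add_left, add_smul]),
    fun s x => by
      show μ (lX s x) y • a = s • μ x y • a
      rw [h.mu_lsmul, mul_smul]⟩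

@[simp] theorem tmul_apply (y : Y) (a : A) (x : X) : h.tmul y a x = μ x y • a := rfl

theorem tmul_add_left (y y' : Y) (a : A) : h.tmul (y + y') a = h.tmul y a + h.tmul y' a := by
  ext x; simp [h.mu_add_right, add_smul]

theorem tmul_add_right (y : Y) (a a' : A) : h.tmul y (a + a') = h.tmul y a + h.tmul y a' := by
  ext x; simp

@[simp] theorem tmul_zero (y : Y) : h.tmul y (0 : A) = 0 := by
  ext x; simp

theorem tmul_lsmul (t : T) (y : Y) (a : A) : h.tmul (lY t y) a = t • h.tmul y a := by
  ext x; simp [h.mu_rsmul_left]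

theorem tmul_rsmul (y : Y) (s : S) (a : A) : h.tmul (rY y s) a = h.tmul y (s • a) := by
  ext x; simp [h.mu_rsmul, mul_smul]

theorem eq_sum_tmul {ι : Type*} [Fintype ι] {y : ι → Y} {x : ι → X}
    (hyx : ∑ i, ν (y i) (x i) = 1) (φ : h.Hom A) : φ = ∑ i, h.tmul (y i) (φ (x i)) := by
  ext x'
  calc φ x' = φ (rX x' (∑ i, ν (y i) (x i))) := by rw [hyx, h.bimoduleX.rsmul_one]
    _ = ∑ i, φ (lX (μ x' (y i)) (x i)) := by
      simp only [h.bimoduleX.rsmul_sum, map_sum, h.lsmul_mu]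
    _ = (∑ i, h.tmul (y i) (φ (x i))) x' := by simp [Hom.sum_apply, Hom.map_lsmul]

theorem mem_of_forall_tmul_mem {N : AddSubgroup (h.Hom A)} (hN : ∀ y a, h.tmul y a ∈ N)
    (φ : h.Hom A) : φ ∈ N := by
  obtain ⟨ι, _, y, x, hyx⟩ := h.exists_sum_nu_eq_one
  rw [h.eq_sum_tmul hyx φ]
  exact N.sum_mem fun i _ => hN _ _

theorem linearMap_ext {C : Type*} [AddCommGroup C] [Module T C] {f g : h.Hom A →ₗ[T] C}
    (hfg : ∀ y a, f (h.tmul y a) = g (h.tmul y a)) : f = g :=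
  LinearMap.ext (h.mem_of_forall_tmul_mem (N := (LinearMap.eqLocus f g).toAddSubgroup) hfg)

theorem eq_zero_of_forall_tmul_eq_zero {a : A} (ha : ∀ y, h.tmul y a = 0) : a = 0 := by
  obtain ⟨ι, _, x, y, hxy⟩ := h.symm.exists_sum_nu_eq_one
  calc a = (∑ i, μ (x i) (y i)) • a := by rw [hxy, one_smul]
    _ = ∑ i, h.tmul (y i) a (x i) := by simp [Finset.sum_smul]
    _ = 0 := by simp [ha]

variable (h A) in
def unit : A →ₗ[S] h.symm.Hom (h.Hom A) where
  toFun a := ⟨AddMonoidHom.mk' (h.tmul · a) (h.tmul_add_left · · a), (h.tmul_lsmul · · a)⟩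
  map_add' a a' := Hom.ext fun y => h.tmul_add_right y a a'
  map_smul' s a := Hom.ext fun y => (h.tmul_rsmul y s a).symm

@[simp] theorem unit_apply (a : A) (y : Y) : h.unit A a y = h.tmul y a := rfl

theorem unit_bijective : Function.Bijective (h.unit A) := by
  obtain ⟨ι, _, x, y, hxy⟩ := h.symm.exists_sum_nu_eq_one
  refine ⟨(injective_iff_map_eq_zero _).2 fun a ha =>
    h.eq_zero_of_forall_tmul_eq_zero fun y' => by simpa using congrArg (· y') ha, fun ψ => ?_⟩
  refine ⟨∑ i, ψ (y i) (x i), ?_⟩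
  ext y' x'
  calc μ x' y' • ∑ i, ψ (y i) (x i) = ∑ i, ψ (y i) (rX x' (ν y' (x i))) := by
        simp [Finset.smul_sum, ← Hom.map_lsmul, h.lsmul_mu]
    _ = ψ (∑ i, lY (ν y' (x i)) (y i)) x' := by
        simp [map_sum, Hom.sum_apply, Hom.map_lsmul]
    _ = ψ y' x' := by rw [h.sum_lsmul_nu hxy]

variable (h A) in
def unitEquiv : A ≃ₗ[S] h.symm.Hom (h.Hom A) := LinearEquiv.ofBijective _ h.unit_bijective

@[simp] theorem unitEquiv_apply (a : A) : h.unitEquiv A a = h.unit A a := rfl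

variable (h) in
def map (g : A →ₗ[S] B) : h.Hom A →ₗ[T] h.Hom B where
  toFun φ := ⟨g.toAddMonoidHom.comp φ.1, fun s x => by
    show g (φ (lX s x)) = s • g (φ x)
    rw [φ.map_lsmul, map_smul]⟩
  map_add' φ ψ := by ext x; exact g.map_add _ _
  map_smul' t φ := rfl

@[simp] theorem map_apply (g : A →ₗ[S] B) (φ : h.Hom A) (x : X) : h.map g φ x = g (φ x) := rfl

@[simp] theorem map_tmul (g : A →ₗ[S] B) (y : Y) (a : A) :
    h.map g (h.tmul y a) = h.tmul y (g a) := by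
  ext x; simp

variable (h) in
def mapEquiv (e : A ≃ₗ[S] B) : h.Hom A ≃ₗ[T] h.Hom B :=
  LinearEquiv.ofLinearMap (h.map e) (h.map e.symm) (by ext φ x; simp) (by ext φ x; simp)

@[simp] theorem mapEquiv_apply (e : A ≃ₗ[S] B) (φ : h.Hom A) :
    h.mapEquiv e φ = h.map e φ := rfl

theorem map_surjective {g : A →ₗ[S] B} (hg : Function.Surjective g) :
    Function.Surjective (h.map g) := by
  refine fun φ => h.mem_of_forall_tmul_mem (N := (LinearMap.range (h.map g)).toAddSubgroup)
    (fun y b => ?_) φ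
  obtain ⟨a, rfl⟩ := hg b
  exact ⟨h.tmul y a, h.map_tmul g y a⟩

theorem injective_of_map_injective {g : A →ₗ[S] B} (hg : Function.Injective (h.map g)) :
    Function.Injective g :=
  (injective_iff_map_eq_zero _).2 fun a ha =>
    h.eq_zero_of_forall_tmul_eq_zero fun y => hg (by simp [ha])

instance finite [Module.Finite S A] : Module.Finite T (h.Hom A) := by
  obtain ⟨s, hs⟩ := Module.Finite.fg_top (R := S) (M := A)
  obtain ⟨ι, _, x, y, hxy⟩ := h.symm.exists_sum_nu_eq_one
  let gens : ι × s → h.Hom A := fun p => h.tmul (y p.1) p.2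
  have hgens : ∀ a y', h.tmul y' a ∈ Submodule.span T (Set.range gens) := by
    intro a
    have ha : a ∈ Submodule.span S (s : Set A) := hs ▸ Submodule.mem_top
    induction ha using Submodule.span_induction with
    | mem a ha =>
      intro y'
      rw [← h.sum_lsmul_nu hxy y', ← unit_apply, map_sum (h.unit A a)]
      refine Submodule.sum_mem _ fun i _ => ?_
      have hi : gens (i, ⟨a, ha⟩) ∈ Submodule.span T (Set.range gens) :=
        Submodule.subset_span ⟨_, rfl⟩
      simpa [h.tmul_lsmul] using Submodule.smul_mem _ (ν y' (x i)) hi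
    | zero => simp
    | add a a' _ _ iha iha' =>
      exact fun y' => h.tmul_add_right y' a a' ▸ Submodule.add_mem _ (iha y') (iha' y')
    | smul s a _ iha => exact fun y' => h.tmul_rsmul y' s a ▸ iha _
  refine ⟨Submodule.fg_def.2 ⟨_, Set.finite_range gens, Submodule.eq_top_iff'.2 ?_⟩⟩
  exact h.mem_of_forall_tmul_mem (N := (Submodule.span T (Set.range gens)).toAddSubgroup)
    fun y a => hgens a y

end IsMoritaContext

end MoritaContext

section Graded

variable {R P lP rP}
variable {Q : ℕ → Type} [∀ n, AddCommGroup (Q n)] {lQ : ∀ n, R n → Q n → Q n}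
  {rQ : ∀ n, Q n → R (n + 1) → Q n} {tau : ∀ n, P n → Q n → R (n + 1)}
  {sig : ∀ n, Q n → P n → R n}
  (hM : ∀ n, IsMoritaContext (lQ n) (rQ n) (lP n) (rP n) (sig n) (tau n))

open IsMoritaContext

namespace GrHom

variable {X Y Z : GrMod R P lP rP}

@[ext] theorem ext {F G : GrHom R P lP rP X Y} (h : ∀ n, F.f n = G.f n) : F = G := by
  cases F; cases G; simp only [mk.injEq]; exact funext h

def id (X : GrMod R P lP rP) : GrHom R P lP rP X X := ⟨fun _ => LinearMap.id, fun _ _ _ => rfl⟩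

def comp (G : GrHom R P lP rP Y Z) (F : GrHom R P lP rP X Y) : GrHom R P lP rP X Z :=
  ⟨fun n => G.f n ∘ₗ F.f n, fun n p m => by simp [F.compat, G.compat]⟩

@[simp] theorem comp_f (G : GrHom R P lP rP Y Z) (F : GrHom R P lP rP X Y) (n : ℕ)
    (x : X.M n) : (G.comp F).f n x = G.f n (F.f n x) := rfl

end GrHom

structure GrIso (X Y : GrMod R P lP rP) where
  e : ∀ n, X.M n ≃ₗ[R n] Y.M n
  map_act : ∀ n p m, e (n + 1) (X.act n p m) = Y.act n p (e n m)

namespace GrMod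

variable (Y : GrMod R P lP rP)

def curryAct (n : ℕ) : Y.M n →ₗ[R n] (hM n).symm.Hom (Y.M (n + 1)) where
  toFun m := ⟨AddMonoidHom.mk' (Y.act n · m) (Y.act_addl n · · m), (Y.act_l n · · m)⟩
  map_add' m m' := Hom.ext fun p => Y.act_addr n p m m'
  map_smul' r m := Hom.ext fun p => (Y.act_r n p r m).symm

@[simp] theorem curryAct_apply (n : ℕ) (m : Y.M n) (p : P n) :
    Y.curryAct hM n m p = Y.act n p m := rfl

def actLin (n : ℕ) : (hM n).Hom (Y.M n) →ₗ[R (n + 1)] Y.M (n + 1) :=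
  ((hM n).symm.unitEquiv (Y.M (n + 1))).symm.toLinearMap ∘ₗ (hM n).map (Y.curryAct hM n)

@[simp] theorem actLin_tmul (n : ℕ) (p : P n) (m : Y.M n) :
    Y.actLin hM n ((hM n).tmul p m) = Y.act n p m := by
  rw [actLin, LinearMap.comp_apply, map_tmul, LinearEquiv.coe_toLinearMap,
    LinearEquiv.symm_apply_eq]
  ext q p'
  simp [← Y.act_l, (hM n).lsmul_nu]

theorem curryAct_eq (n : ℕ) :
    Y.curryAct hM n = (hM n).symm.map (Y.actLin hM n) ∘ₗ (hM n).unit (Y.M n) := by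
  ext m p; simp

theorem curryAct_surjective_of_actLin_surjective {n : ℕ}
    (hs : Function.Surjective (Y.actLin hM n)) : Function.Surjective (Y.curryAct hM n) := by
  rw [curryAct_eq]
  exact ((hM n).symm.map_surjective hs).comp (hM n).unit_bijective.2

theorem actLin_bijective_of_curryAct_bijective {n : ℕ}
    (hb : Function.Bijective (Y.curryAct hM n)) : Function.Bijective (Y.actLin hM n) :=
  ((hM n).symm.unitEquiv _).symm.bijective.comp
    ((hM n).mapEquiv (LinearEquiv.ofBijective _ hb)).bijective

def actLinEquiv {n : ℕ} (hb : Function.Bijective (Y.curryAct hM n)) :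
    (hM n).Hom (Y.M n) ≃ₗ[R (n + 1)] Y.M (n + 1) :=
  LinearEquiv.ofBijective _ (Y.actLin_bijective_of_curryAct_bijective hM hb)

@[simp] theorem actLinEquiv_tmul {n : ℕ} (hb : Function.Bijective (Y.curryAct hM n))
    (p : P n) (m : Y.M n) : Y.actLinEquiv hM hb ((hM n).tmul p m) = Y.act n p m :=
  Y.actLin_tmul hM n p m

variable (V : Type) [AddCommGroup V] [Module (R 0) V]

/-- `R_{n0} ⊗_{R_0} V`, built as `P_{n-1} ⊗ ⋯ ⊗ P_0 ⊗ V`. -/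
def inducedLevel : ∀ n, ModuleCat (R n)
  | 0 => ModuleCat.of (R 0) V
  | n + 1 => ModuleCat.of (R (n + 1)) ((hM n).Hom (inducedLevel n))

/-- The induced module `Φ V = ⊕ₙ R_{n0} ⊗_{R_0} V`. -/
def induced : GrMod R P lP rP where
  M n := inducedLevel hM V n
  act n := (hM n).tmul
  act_addl n := (hM n).tmul_add_left
  act_addr n := (hM n).tmul_add_right
  act_l n := (hM n).tmul_lsmul
  act_r n := (hM n).tmul_rsmul

theorem curryAct_induced_bijective (n : ℕ) :
    Function.Bijective ((induced hM V).curryAct hM n) :=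
  (hM n).unit_bijective

variable {V}

def inducedLift (g : V →ₗ[R 0] Y.M 0) : ∀ n, (induced hM V).M n →ₗ[R n] Y.M n
  | 0 => g
  | n + 1 => Y.actLin hM n ∘ₗ (hM n).map (inducedLift g n)

def inducedLiftHom (g : V →ₗ[R 0] Y.M 0) : GrHom R P lP rP (induced hM V) Y where
  f := Y.inducedLift hM g
  compat n p m := by
    change Y.actLin hM n ((hM n).map _ ((hM n).tmul p m)) = _
    rw [map_tmul, actLin_tmul]

theorem induced_grHom_ext {F G : GrHom R P lP rP (induced hM V) Y} (h0 : F.f 0 = G.f 0) :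
    F = G := by
  ext1 n
  induction n with
  | zero => exact h0
  | succ n ih =>
    refine (hM n).linearMap_ext fun p (m : (induced hM V).M n) => ?_
    change F.f (n + 1) ((induced hM V).act n p m) = G.f (n + 1) ((induced hM V).act n p m)
    rw [F.compat, G.compat, ih]

theorem isFG_induced (V : Type) [AddCommGroup V] [Module (R 0) V] [Module.Finite (R 0) V] :
    (induced hM V).IsFG R P lP rP := by
  classical
  obtain ⟨s, hs⟩ := Module.Finite.fg_top (R := R 0) (M := V)
  refine ⟨s.image fun v => ⟨0, v⟩, fun N hN hgN n => ?_⟩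
  induction n with
  | zero =>
    refine fun v => (Submodule.span_le.2 fun v hv => ?_) (hs ▸ Submodule.mem_top (x := v))
    exact hgN ⟨0, v⟩ (Finset.mem_image_of_mem _ hv)
  | succ n ih =>
    exact (hM n).mem_of_forall_tmul_mem (N := (N (n + 1)).toAddSubgroup)
      fun p m => hN n p m (ih m)

def IsFreeOn {V : Type*} [AddCommGroup V] [Module (R 0) V] (η : V →ₗ[R 0] Y.M 0) : Prop :=
  ∀ (Z : GrMod R P lP rP) (g : V →ₗ[R 0] Z.M 0),
    ∃! F : GrHom R P lP rP Y Z, ∀ v, F.f 0 (η v) = g v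

variable (V) in
theorem isFreeOn_induced : (induced hM V).IsFreeOn LinearMap.id := fun Z g =>
  ⟨Z.inducedLiftHom hM g, fun _ => rfl, fun _ hF => Z.induced_grHom_ext hM (LinearMap.ext hF)⟩

theorem IsFG.of_grIso {X Y : GrMod R P lP rP} (hX : X.IsFG R P lP rP) (u : GrIso X Y) :
    Y.IsFG R P lP rP := by
  classical
  obtain ⟨gens, hgens⟩ := hX
  refine ⟨gens.image fun g => ⟨g.1, u.e g.1 g.2⟩, fun N hN hgN n y => ?_⟩
  have := hgens (fun n => (N n).comap (u.e n).toLinearMap)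
    (fun n p m hm => by simpa [u.map_act] using hN n p _ hm)
    (fun g hg => hgN _ (Finset.mem_image_of_mem _ hg)) n ((u.e n).symm y)
  simpa using this

end GrMod

theorem GrIso.curryAct_bijective {X Y : GrMod R P lP rP} (u : GrIso X Y) {n : ℕ}
    (hX : Function.Bijective (X.curryAct hM n)) : Function.Bijective (Y.curryAct hM n) := by
  have : ⇑(Y.curryAct hM n) =
      (hM n).symm.mapEquiv (u.e (n + 1)) ∘ X.curryAct hM n ∘ (u.e n).symm := by
    ext m p
    simp [u.map_act]
  rw [this]
  exact ((hM n).symm.mapEquiv _).bijective.comp (hX.comp (u.e n).symm.bijective)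

namespace GrMod.IsFreeOn

variable {X Y : GrMod R P lP rP} {V V₀ : Type*} [AddCommGroup V] [Module (R 0) V]
  [AddCommGroup V₀] [Module (R 0) V₀]

theorem comp_linearEquiv {η : V →ₗ[R 0] Y.M 0} (hY : Y.IsFreeOn η) (e : V₀ ≃ₗ[R 0] V) :
    Y.IsFreeOn (η ∘ₗ e.toLinearMap) := fun Z g => by
  obtain ⟨F, hF, hFu⟩ := hY Z (g ∘ₗ e.symm.toLinearMap)
  exact ⟨F, fun v => by simpa using hF (e v),
    fun F' hF' => hFu F' fun v => by simpa using hF' (e.symm v)⟩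

theorem exists_grIso {ηX : V →ₗ[R 0] X.M 0} {ηY : V →ₗ[R 0] Y.M 0} (hX : X.IsFreeOn ηX)
    (hY : Y.IsFreeOn ηY) : ∃ u : GrIso X Y, ∀ v, u.e 0 (ηX v) = ηY v := by
  obtain ⟨F, hF, -⟩ := hX Y ηY
  obtain ⟨G, hG, -⟩ := hY X ηX
  have hGF : G.comp F = GrHom.id X :=
    (hX X ηX).unique (fun v => by simp [hF, hG]) (fun v => rfl)
  have hFG : F.comp G = GrHom.id Y :=
    (hY Y ηY).unique (fun v => by simp [hF, hG]) (fun v => rfl)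
  refine ⟨⟨fun n => LinearEquiv.ofLinearMap (F.f n) (G.f n) ?_ ?_, F.compat⟩, hF⟩
  · exact congrArg (GrHom.f · n) hFG
  · exact congrArg (GrHom.f · n) hGF

theorem exists_grIso_induced {η : V →ₗ[R 0] Y.M 0} (hY : Y.IsFreeOn η) (V₀ : Type)
    [AddCommGroup V₀] [Module (R 0) V₀] (e : V₀ ≃ₗ[R 0] V) :
    ∃ u : GrIso (induced hM V₀) Y, ∀ v : V₀, u.e 0 v = η (e v) :=
  (isFreeOn_induced hM V₀).exists_grIso (hY.comp_linearEquiv e)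

variable {η : V →ₗ[R 0] Y.M 0}

theorem curryAct_bijective [Small.{0} V] (hY : Y.IsFreeOn η) (n : ℕ) :
    Function.Bijective (Y.curryAct hM n) := by
  obtain ⟨u, -⟩ := hY.exists_grIso_induced hM _ (Shrink.linearEquiv (R 0) V)
  exact u.curryAct_bijective hM (curryAct_induced_bijective hM _ n)

theorem bijective [Small.{0} V]
    (hM : ∀ n, IsMoritaContext (lQ n) (rQ n) (lP n) (rP n) (sig n) (tau n))
    (hY : Y.IsFreeOn η) : Function.Bijective η := by
  obtain ⟨u, hu⟩ := hY.exists_grIso_induced hM _ (Shrink.linearEquiv (R 0) V)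
  have : ⇑η = fun v => u.e 0 ((Shrink.linearEquiv (R 0) V).symm v) :=
    funext fun v => by rw [hu, LinearEquiv.apply_symm_apply]
  rw [this]
  exact (u.e 0).bijective.comp (LinearEquiv.bijective _)

theorem isFG [Module.Finite (R 0) V]
    (hM : ∀ n, IsMoritaContext (lQ n) (rQ n) (lP n) (rP n) (sig n) (tau n))
    (hY : Y.IsFreeOn η) : Y.IsFG R P lP rP := by
  have := Module.Finite.small.{0} (R 0) V
  obtain ⟨u, -⟩ := hY.exists_grIso_induced hM _ (Shrink.linearEquiv (R 0) V)
  exact (isFG_induced hM _).of_grIso u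

end GrMod.IsFreeOn

section TailMorphisms

variable {X Y : GrMod R P lP rP}

/-- These families represent the morphisms `π X → π Y` of the quotient by bounded modules. -/
def IsTailHom (n₀ : ℕ) (g : ∀ n, n₀ ≤ n → (X.M n →ₗ[R n] Y.M n)) : Prop :=
  ∀ (n : ℕ) (hn : n₀ ≤ n) (p : P n) (m : X.M n),
    g (n + 1) (hn.trans (Nat.le_succ n)) (X.act n p m) = Y.act n p (g n hn m)

def tailCons {n₀ : ℕ} (d : X.M n₀ →ₗ[R n₀] Y.M n₀)
    (g : ∀ n, n₀ + 1 ≤ n → (X.M n →ₗ[R n] Y.M n)) : ∀ n, n₀ ≤ n → (X.M n →ₗ[R n] Y.M n) :=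
  fun n hn => if h : n₀ + 1 ≤ n then g n h else (by omega : n₀ = n) ▸ d

theorem tailCons_of_lt {n₀ : ℕ} (d : X.M n₀ →ₗ[R n₀] Y.M n₀)
    (g : ∀ n, n₀ + 1 ≤ n → (X.M n →ₗ[R n] Y.M n)) {n : ℕ} (hn : n₀ ≤ n) (h : n₀ + 1 ≤ n) :
    tailCons d g n hn = g n h :=
  dif_pos h

theorem tailCons_self {n₀ : ℕ} (d : X.M n₀ →ₗ[R n₀] Y.M n₀)
    (g : ∀ n, n₀ + 1 ≤ n → (X.M n →ₗ[R n] Y.M n)) : tailCons d g n₀ le_rfl = d :=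
  dif_neg (by omega)

theorem isTailHom_tailCons {n₀ : ℕ} {d : X.M n₀ →ₗ[R n₀] Y.M n₀}
    {g : ∀ n, n₀ + 1 ≤ n → (X.M n →ₗ[R n] Y.M n)} (hg : IsTailHom (n₀ + 1) g)
    (hd : ∀ p m, Y.act n₀ p (d m) = g (n₀ + 1) le_rfl (X.act n₀ p m)) :
    IsTailHom n₀ (tailCons d g) := by
  intro n hn p m
  rw [tailCons_of_lt d g _ (by omega)]
  rcases hn.eq_or_lt with rfl | hlt
  · rw [tailCons_self, hd]
  · rw [tailCons_of_lt d g hn hlt, hg n hlt]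

theorem exists_linearMap_act_eq {n : ℕ} (hY : Function.Bijective (Y.curryAct hM n))
    (g : X.M (n + 1) →ₗ[R (n + 1)] Y.M (n + 1)) :
    ∃ d : X.M n →ₗ[R n] Y.M n, ∀ p m, Y.act n p (d m) = g (X.act n p m) := by
  let e := LinearEquiv.ofBijective _ hY
  refine ⟨e.symm.toLinearMap ∘ₗ (hM n).symm.map g ∘ₗ X.curryAct hM n, fun p m => ?_⟩
  exact congrArg (· p) (e.apply_symm_apply ((hM n).symm.map g (X.curryAct hM n m)))

theorem exists_grHom_eq_of_isTailHom (hY : ∀ n, Function.Bijective (Y.curryAct hM n)) :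
    ∀ (n₀ : ℕ) (g : ∀ n, n₀ ≤ n → (X.M n →ₗ[R n] Y.M n)), IsTailHom n₀ g →
      ∃ G : GrHom R P lP rP X Y, ∀ n hn, G.f n = g n hn := by
  intro n₀
  induction n₀ with
  | zero =>
    exact fun g hg => ⟨⟨fun n => g n n.zero_le, fun n => hg n n.zero_le⟩, fun _ _ => rfl⟩
  | succ n₀ ih =>
    intro g hg
    obtain ⟨d, hd⟩ := exists_linearMap_act_eq hM (hY n₀) (g (n₀ + 1) le_rfl)
    obtain ⟨G, hG⟩ := ih _ (isTailHom_tailCons hg hd)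
    exact ⟨G, fun n hn => (hG n (by omega)).trans (tailCons_of_lt d g _ hn)⟩

theorem GrHom.f_eq_of_f_succ_eq {n : ℕ} (hY : Function.Injective (Y.curryAct hM n))
    {F G : GrHom R P lP rP X Y} (h : F.f (n + 1) = G.f (n + 1)) : F.f n = G.f n :=
  LinearMap.ext fun m => hY <| Hom.ext fun p => by
    simp only [GrMod.curryAct_apply, ← F.compat, ← G.compat, h]

theorem GrHom.f_zero_eq_of_f_eq (hY : ∀ n, Function.Injective (Y.curryAct hM n))
    {F G : GrHom R P lP rP X Y} {n : ℕ} (h : F.f n = G.f n) : F.f 0 = G.f 0 := by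
  induction n with
  | zero => exact h
  | succ n ih => exact ih (GrHom.f_eq_of_f_succ_eq hM (hY n) h)

theorem GrMod.IsFreeOn.existsUnique_eventuallyEq_of_isTailHom {V W : Type*} [AddCommGroup V]
    [Module (R 0) V] [AddCommGroup W] [Module (R 0) W] {ηV : V →ₗ[R 0] X.M 0}
    {ηW : W →ₗ[R 0] Y.M 0} (hX : X.IsFreeOn ηV) (hY : ∀ n, Function.Bijective (Y.curryAct hM n))
    (hηW : Function.Bijective ηW) {n₀ : ℕ} {g : ∀ n, n₀ ≤ n → (X.M n →ₗ[R n] Y.M n)}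
    (hg : IsTailHom n₀ g) :
    ∃! f : V →ₗ[R 0] W, ∀ F : GrHom R P lP rP X Y, (∀ v, F.f 0 (ηV v) = ηW (f v)) →
      ∃ (n₁ : ℕ) (hle : n₀ ≤ n₁), ∀ (n : ℕ) (hn : n₁ ≤ n) (x : X.M n),
        F.f n x = g n (hle.trans hn) x := by
  obtain ⟨G, hG⟩ := exists_grHom_eq_of_isTailHom hM hY n₀ g hg
  let e := LinearEquiv.ofBijective ηW hηW
  refine ⟨e.symm.toLinearMap ∘ₗ G.f 0 ∘ₗ ηV, fun F hF => ⟨n₀, le_rfl, fun n hn x => ?_⟩,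
    fun f hf => ?_⟩
  · have : F = G := (hX Y (G.f 0 ∘ₗ ηV)).unique
      (fun v => (hF v).trans (e.apply_symm_apply _)) (fun _ => rfl)
    rw [this, hG]
  · obtain ⟨F, hF, -⟩ := hX Y (ηW ∘ₗ f)
    obtain ⟨n₁, hle, hFg⟩ := hf F hF
    have hFG : F.f 0 = G.f 0 := GrHom.f_zero_eq_of_f_eq hM (fun n => (hY n).1)
      (n := n₁) (LinearMap.ext fun x => (hFg n₁ le_rfl x).trans (by rw [hG]))
    ext v
    simp [e, ← hFG, hF]

def succEquiv {n : ℕ} (hX : Function.Bijective (X.curryAct hM n))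
    (hY : Function.Bijective (Y.curryAct hM n)) (e : X.M n ≃ₗ[R n] Y.M n) :
    X.M (n + 1) ≃ₗ[R (n + 1)] Y.M (n + 1) :=
  (X.actLinEquiv hM hX).symm ≪≫ₗ (hM n).mapEquiv e ≪≫ₗ Y.actLinEquiv hM hY

theorem succEquiv_act {n : ℕ} (hX : Function.Bijective (X.curryAct hM n))
    (hY : Function.Bijective (Y.curryAct hM n)) (e : X.M n ≃ₗ[R n] Y.M n) (p : P n)
    (m : X.M n) : succEquiv hM hX hY e (X.act n p m) = Y.act n p (e m) := by
  have : (X.actLinEquiv hM hX).symm (X.act n p m) = (hM n).tmul p m := by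
    rw [LinearEquiv.symm_apply_eq, GrMod.actLinEquiv_tmul]
  rw [succEquiv, LinearEquiv.trans_apply, LinearEquiv.trans_apply, this]
  simp

theorem exists_isTailHom_linearEquiv_of_bijective {n₁ : ℕ}
    (hX : ∀ n, n₁ ≤ n → Function.Bijective (X.curryAct hM n))
    (hY : ∀ n, n₁ ≤ n → Function.Bijective (Y.curryAct hM n)) (u₀ : X.M n₁ ≃ₗ[R n₁] Y.M n₁) :
    ∃ u : ∀ n, n₁ ≤ n → (X.M n ≃ₗ[R n] Y.M n),
      IsTailHom n₁ fun n hn => (u n hn).toLinearMap := by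
  refine ⟨fun n hn => Nat.leRec (motive := fun n _ => X.M n ≃ₗ[R n] Y.M n) u₀
    (fun k hk e => succEquiv hM (hX k hk) (hY k hk) e) hn, fun n hn p m => ?_⟩
  dsimp only
  rw [LinearEquiv.coe_coe, LinearEquiv.coe_coe,
    Nat.leRec_succ (motive := fun n _ => X.M n ≃ₗ[R n] Y.M n) _ _ hn]
  exact succEquiv_act hM _ _ _ p m

end TailMorphisms

namespace GrMod

variable (Y : GrMod R P lP rP)

/-- Closed under the action by construction, so a generating set forces it to be everything. -/
def spanGens (gens : Finset (Σ n : ℕ, Y.M n)) : ∀ n, Submodule (R n) (Y.M n)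
  | 0 => Submodule.span (R 0) (Sigma.mk 0 ⁻¹' gens)
  | n + 1 => Submodule.span (R (n + 1)) (Sigma.mk (n + 1) ⁻¹' gens) ⊔
      LinearMap.range (Y.actLin hM n)

variable {Y}

theorem mem_spanGens {gens : Finset (Σ n : ℕ, Y.M n)}
    (hgens : ∀ N : ∀ n, Submodule (R n) (Y.M n),
      (∀ (n : ℕ) (p : P n) (m : Y.M n), m ∈ N n → Y.act n p m ∈ N (n + 1)) →
      (∀ g ∈ gens, g.2 ∈ N g.1) → ∀ (n : ℕ) (x : Y.M n), x ∈ N n) (n : ℕ) (x : Y.M n) :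
    x ∈ Y.spanGens hM gens n := by
  refine hgens _ (fun n p m _ => ?_) (fun ⟨k, x⟩ hg => ?_) n x
  · exact Submodule.mem_sup_right ⟨(hM n).tmul p m, Y.actLin_tmul hM n p m⟩
  · cases k with
    | zero => exact Submodule.subset_span hg
    | succ k => exact Submodule.mem_sup_left (Submodule.subset_span hg)

theorem IsFG.finite (hM : ∀ n, IsMoritaContext (lQ n) (rQ n) (lP n) (rP n) (sig n) (tau n))
    (hY : Y.IsFG R P lP rP) (n : ℕ) : Module.Finite (R n) (Y.M n) := by
  obtain ⟨gens, hgens⟩ := hY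
  have hfin : ∀ n, (Sigma.mk n ⁻¹' (gens : Set (Σ n : ℕ, Y.M n))).Finite := fun n =>
    gens.finite_toSet.preimage sigma_mk_injective.injOn
  have htop : ∀ n, Y.spanGens hM gens n = ⊤ := fun n =>
    Submodule.eq_top_iff'.2 (mem_spanGens hM hgens n)
  induction n with
  | zero => exact ⟨htop 0 ▸ Submodule.fg_span (hfin 0)⟩
  | succ n ih =>
    refine ⟨htop (n + 1) ▸ (Submodule.fg_span (hfin (n + 1))).sup ?_⟩
    rw [LinearMap.range_eq_map]
    exact Module.Finite.fg_top.map _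

theorem IsFG.exists_curryAct_surjective (hY : Y.IsFG R P lP rP) :
    ∃ n₀, ∀ n, n₀ ≤ n → Function.Surjective (Y.curryAct hM n) := by
  obtain ⟨gens, hgens⟩ := hY
  refine ⟨gens.sup Sigma.fst, fun n hn => Y.curryAct_surjective_of_actLin_surjective hM ?_⟩
  have hempty : Sigma.mk (n + 1) ⁻¹' (gens : Set (Σ n : ℕ, Y.M n)) = ∅ := by
    ext x
    simp only [Set.mem_preimage, Finset.mem_coe, Set.mem_empty_iff_false, iff_false]
    intro hx
    have := Finset.le_sup (f := Sigma.fst) hx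
    dsimp only at this
    omega
  intro x
  simpa [spanGens, hempty] using mem_spanGens hM hgens (n + 1) x

end GrMod

/-- `R_{0n} ⊗_{R_n} A`, built as `Hom_{R_1}(P_0, ⋯ Hom_{R_n}(P_{n-1}, A))`. -/
def downPow : ∀ n (A : Type) [AddCommGroup A] [Module (R n) A], ModuleCat (R 0)
  | 0, A, _, _ => ModuleCat.of (R 0) A
  | n + 1, A, _, _ => downPow n ((hM n).symm.Hom A)

def downPowMap : ∀ n {A B : Type} [AddCommGroup A] [Module (R n) A] [AddCommGroup B]
    [Module (R n) B], (A →ₗ[R n] B) → (downPow hM n A →ₗ[R 0] downPow hM n B)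
  | 0, _, _, _, _, _, _, f => f
  | n + 1, _, _, _, _, _, _, f => downPowMap n ((hM n).symm.map f)

theorem downPowMap_surjective : ∀ n {A B : Type} [AddCommGroup A] [Module (R n) A]
    [AddCommGroup B] [Module (R n) B] {f : A →ₗ[R n] B}, Function.Surjective f →
    Function.Surjective (downPowMap hM n f)
  | 0, _, _, _, _, _, _, _, hf => hf
  | n + 1, _, _, _, _, _, _, _, hf => downPowMap_surjective n ((hM n).symm.map_surjective hf)

theorem injective_of_downPowMap_injective : ∀ n {A B : Type} [AddCommGroup A]
    [Module (R n) A] [AddCommGroup B] [Module (R n) B] {f : A →ₗ[R n] B},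
    Function.Injective (downPowMap hM n f) → Function.Injective f
  | 0, _, _, _, _, _, _, _, hf => hf
  | n + 1, _, _, _, _, _, _, _, hf =>
    (hM n).symm.injective_of_map_injective (injective_of_downPowMap_injective n hf)

theorem downPow_finite : ∀ n (A : Type) [AddCommGroup A] [Module (R n) A]
    [Module.Finite (R n) A], Module.Finite (R 0) (downPow hM n A)
  | 0, _, _, _, h => h
  | n + 1, A, _, _, _ => downPow_finite n ((hM n).symm.Hom A)

def inducedDownPowEquiv : ∀ n (A : Type) [AddCommGroup A] [Module (R n) A],
    (GrMod.induced hM (downPow hM n A)).M n ≃ₗ[R n] A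
  | 0, _, _, _ => LinearEquiv.refl _ _
  | n + 1, A, _, _ => (hM n).mapEquiv (inducedDownPowEquiv n ((hM n).symm.Hom A)) ≪≫ₗ
      ((hM n).symm.unitEquiv A).symm

theorem GrMod.IsFG.exists_curryAct_bijective [IsNoetherianRing (R 0)] {Y : GrMod R P lP rP}
    (hY : Y.IsFG R P lP rP) : ∃ n₁, ∀ n, n₁ ≤ n → Function.Bijective (Y.curryAct hM n) := by
  obtain ⟨n₀, hsurj⟩ := hY.exists_curryAct_surjective hM
  have := hY.finite hM n₀
  have := downPow_finite hM n₀ (Y.M n₀)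
  have := isNoetherian_of_isNoetherianRing_of_finite (R 0) (downPow hM n₀ (Y.M n₀))
  obtain ⟨k₀, hk₀⟩ := exists_forall_injective_of_surjective
    (M := fun k => downPow hM (n₀ + k) (Y.M (n₀ + k)))
    (fun k => downPowMap hM (n₀ + k) (Y.curryAct hM (n₀ + k)))
    (fun k => downPowMap_surjective hM _ (hsurj _ (by omega)))
  refine ⟨n₀ + k₀, fun n hn => ⟨?_, hsurj n (by omega)⟩⟩
  obtain ⟨k, rfl⟩ : ∃ k, n = n₀ + k := ⟨n - n₀, by omega⟩
  exact injective_of_downPowMap_injective hM _ (hk₀ k (by omega))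

theorem GrMod.IsFreeOn.exists_isTailHom_linearEquiv {X Y : GrMod R P lP rP} {V : Type*}
    [AddCommGroup V] [Module (R 0) V] {η : V →ₗ[R 0] X.M 0} (hX : X.IsFreeOn η) {n₁ : ℕ}
    (e : downPow hM n₁ (Y.M n₁) ≃ₗ[R 0] V)
    (hY : ∀ n, n₁ ≤ n → Function.Bijective (Y.curryAct hM n)) :
    ∃ u : ∀ n, n₁ ≤ n → (X.M n ≃ₗ[R n] Y.M n),
      IsTailHom n₁ fun n hn => (u n hn).toLinearMap := by
  obtain ⟨v, -⟩ := hX.exists_grIso_induced hM _ e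
  exact exists_isTailHom_linearEquiv_of_bijective hM
    (fun n _ => v.curryAct_bijective hM (GrMod.curryAct_induced_bijective hM _ n)) hY
    ((v.e n₁).symm ≪≫ₗ inducedDownPowEquiv hM n₁ (Y.M n₁))

end Graded

/-- let `R_ℤ` be the Morita ℤ-algebra associated to rings `R_n` and
progenerator bimodules `P_n` (encoded by a Morita context with surjective pairings),
with `R_0` noetherian.  Let `Φ : M ↦ ⊕_n R_{n0} ⊗_{R_0} M` be the induction functor,
characterized by the universal property of `⊕_n R_{n0} ⊗_{R_0} M` as the graded
module freely generated in degree `0` by `M` (via `η : M → Φ(M)_0`).  Then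
`M ↦ π(Φ M)` is an equivalence from finitely generated `R_0`-modules to the quotient
category `R_ℤ`-qgr of noetherian graded `R_ℤ`-modules modulo bounded (torsion)
modules: `Φ` sends finitely generated modules to finitely generated graded modules,
it is fully faithful up to torsion (each "tail" homomorphism `Φ V → Φ W`, defined in
degrees `≥ n₀`, agrees in all large degrees with `Φ f` for a unique
`f : V → W`), and it is essentially surjective up to torsion (every finitely
generated graded module is isomorphic to some `Φ V` in all large degrees). -/
theorem morita_Zalgebra_qgr_equivalence
    (lP_addl : ∀ n (r s : R (n + 1)) p, lP n (r + s) p = lP n r p + lP n s p)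
    (lP_addr : ∀ n (r : R (n + 1)) (p q : P n), lP n r (p + q) = lP n r p + lP n r q)
    (lP_one : ∀ n p, lP n 1 p = p)
    (lP_mul : ∀ n (r s : R (n + 1)) p, lP n (r * s) p = lP n r (lP n s p))
    (rP_addl : ∀ n (p q : P n) r, rP n (p + q) r = rP n p r + rP n q r)
    (rP_addr : ∀ n (p : P n) (r s : R n), rP n p (r + s) = rP n p r + rP n p s)
    (rP_one : ∀ n p, rP n p 1 = p)
    (rP_mul : ∀ n (p : P n) (r s : R n), rP n p (r * s) = rP n (rP n p r) s)
    (lrP : ∀ n (r : R (n + 1)) (p : P n) (s : R n),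
      rP n (lP n r p) s = lP n r (rP n p s))
    (Q : ℕ → Type) [∀ n, AddCommGroup (Q n)]
    (lQ : ∀ n, R n → Q n → Q n) (rQ : ∀ n, Q n → R (n + 1) → Q n)
    (lQ_addl : ∀ n (r s : R n) q, lQ n (r + s) q = lQ n r q + lQ n s q)
    (lQ_addr : ∀ n (r : R n) (q q' : Q n), lQ n r (q + q') = lQ n r q + lQ n r q')
    (lQ_one : ∀ n q, lQ n 1 q = q)
    (lQ_mul : ∀ n (r s : R n) q, lQ n (r * s) q = lQ n r (lQ n s q))
    (rQ_addl : ∀ n (q q' : Q n) r, rQ n (q + q') r = rQ n q r + rQ n q' r)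
    (rQ_addr : ∀ n (q : Q n) (r s : R (n + 1)), rQ n q (r + s) = rQ n q r + rQ n q s)
    (rQ_one : ∀ n q, rQ n q 1 = q)
    (rQ_mul : ∀ n (q : Q n) (r s : R (n + 1)), rQ n q (r * s) = rQ n (rQ n q r) s)
    (lrQ : ∀ n (r : R n) (q : Q n) (s : R (n + 1)),
      rQ n (lQ n r q) s = lQ n r (rQ n q s))
    (tau : ∀ n, P n → Q n → R (n + 1)) (sig : ∀ n, Q n → P n → R n)
    (tau_addl : ∀ n (p p' : P n) q, tau n (p + p') q = tau n p q + tau n p' q)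
    (tau_addr : ∀ n (p : P n) (q q' : Q n), tau n p (q + q') = tau n p q + tau n p q')
    (sig_addl : ∀ n (q q' : Q n) p, sig n (q + q') p = sig n q p + sig n q' p)
    (sig_addr : ∀ n (q : Q n) (p p' : P n), sig n q (p + p') = sig n q p + sig n q p')
    (tau_l : ∀ n (r : R (n + 1)) p q, tau n (lP n r p) q = r * tau n p q)
    (tau_mid : ∀ n (p : P n) (r : R n) q, tau n (rP n p r) q = tau n p (lQ n r q))
    (tau_r : ∀ n (p : P n) q (r : R (n + 1)), tau n p (rQ n q r) = tau n p q * r)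
    (sig_l : ∀ n (r : R n) q p, sig n (lQ n r q) p = r * sig n q p)
    (sig_mid : ∀ n (q : Q n) (r : R (n + 1)) p, sig n (rQ n q r) p = sig n q (lP n r p))
    (sig_r : ∀ n (q : Q n) p (r : R n), sig n q (rP n p r) = sig n q p * r)
    (assocP : ∀ n (p : P n) (q : Q n) (p' : P n),
      lP n (tau n p q) p' = rP n p (sig n q p'))
    (assocQ : ∀ n (q : Q n) (p : P n) (q' : Q n),
      lQ n (sig n q p) q' = rQ n q (tau n p q'))
    (tau_surj : ∀ n (r : R (n + 1)),
      r ∈ AddSubgroup.closure {x : R (n + 1) | ∃ p q, x = tau n p q})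
    (sig_surj : ∀ n (r : R n),
      r ∈ AddSubgroup.closure {x : R n | ∃ q p, x = sig n q p})
    (hnoeth : IsNoetherianRing (R 0))
    -- the induction functor `Φ(M) = ⊕_n R_{n0} ⊗_{R_0} M` and its unit `η`,
    -- given by the universal property of the graded module generated in degree 0
    (Phi : ModuleCat (R 0) → GrMod R P lP rP)
    (eta : ∀ V : ModuleCat (R 0), ↥V →ₗ[R 0] (Phi V).M 0)
    (huniv : ∀ (V : ModuleCat (R 0)) (Y : GrMod R P lP rP)
      (g : ↥V →ₗ[R 0] Y.M 0),
      ∃! h : GrHom R P lP rP (Phi V) Y, ∀ v : ↥V, h.f 0 (eta V v) = g v) :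
    -- (a) Φ sends finitely generated modules to finitely generated graded modules
    (∀ V : ModuleCat (R 0), Module.Finite (R 0) ↥V → (Phi V).IsFG) ∧
    -- (b) Φ is fully faithful up to torsion: tail homomorphisms `Φ V → Φ W`
    -- correspond bijectively to homomorphisms `V → W`
    (∀ V W : ModuleCat (R 0), Module.Finite (R 0) ↥V → Module.Finite (R 0) ↥W →
      ∀ (n₀ : ℕ) (g : ∀ n, n₀ ≤ n → ((Phi V).M n →ₗ[R n] (Phi W).M n)),
        (∀ (n : ℕ) (hn : n₀ ≤ n) (p : P n) (m : (Phi V).M n),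
          g (n + 1) (hn.trans (Nat.le_succ n)) ((Phi V).act n p m) =
            (Phi W).act n p (g n hn m)) →
        ∃! f : ↥V →ₗ[R 0] ↥W,
          ∀ h : GrHom R P lP rP (Phi V) (Phi W),
            (∀ v : ↥V, h.f 0 (eta V v) = eta W (f v)) →
            ∃ (n₁ : ℕ) (hle : n₀ ≤ n₁), ∀ (n : ℕ) (hn : n₁ ≤ n) (x : (Phi V).M n),
              h.f n x = g n (hle.trans hn) x) ∧
    -- (c) Φ is essentially surjective up to torsion
    (∀ Y : GrMod R P lP rP, Y.IsFG R P lP rP →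
      ∃ V : ModuleCat (R 0), Module.Finite (R 0) ↥V ∧
        ∃ (n₀ : ℕ) (u : ∀ n, n₀ ≤ n → ((Phi V).M n ≃ₗ[R n] Y.M n)),
          ∀ (n : ℕ) (hn : n₀ ≤ n) (p : P n) (m : (Phi V).M n),
            u (n + 1) (hn.trans (Nat.le_succ n)) ((Phi V).act n p m) =
              Y.act n p (u n hn m)) := by
  have hM : ∀ n, IsMoritaContext (lQ n) (rQ n) (lP n) (rP n) (sig n) (tau n) := fun n =>
    ⟨⟨lQ_addl n, lQ_addr n, lQ_one n, lQ_mul n, rQ_addl n, rQ_addr n, rQ_one n, rQ_mul n, lrQ n⟩,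
      ⟨lP_addl n, lP_addr n, lP_one n, lP_mul n, rP_addl n, rP_addr n, rP_one n, rP_mul n, lrP n⟩,
      sig_addl n, sig_addr n, tau_addl n, tau_addr n, sig_l n, sig_mid n, sig_r n, tau_l n,
      tau_mid n, tau_r n, assocQ n, assocP n, sig_surj n, tau_surj n⟩
  have hfree : ∀ V, (Phi V).IsFreeOn (eta V) := huniv
  refine ⟨fun V _ => (hfree V).isFG hM, fun V W _ _ n₀ g hg => ?_, fun Y hY => ?_⟩
  · have := Module.Finite.small.{0} (R 0) W
    exact (hfree V).existsUnique_eventuallyEq_of_isTailHom hM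
      ((hfree W).curryAct_bijective hM) ((hfree W).bijective hM) hg
  · obtain ⟨n₁, hbij⟩ := hY.exists_curryAct_bijective hM
    have := hY.finite hM n₁
    have := downPow_finite hM n₁ (Y.M n₁)
    exact ⟨ModuleCat.of (R 0) (ULift (downPow hM n₁ (Y.M n₁))),
      Module.Finite.equiv ULift.moduleEquiv.symm, n₁,
      (hfree _).exists_isTailHom_linearEquiv hM ULift.moduleEquiv.symm hbij⟩

end
end

section
/- Let W = S_n act diagonally on ℂ[x_1,…,x_n,y_1,…,y_n] = ℂ[ℂ^{2n}], let A¹ denote the space of W-alternating polynomials, J¹ = ℂ[ℂ^{2n}]·A¹ the ideal it generates, and for d ≥ 1 let A^d = (A¹)^d and J^d = (J¹)^d (powers inside ℂ[ℂ^{2n}]), with A⁰ = ℂ[ℂ^{2n}]^W. If d is even, then A^d equals the set of W-invariant elements of J^d; if d is odd, then A^d equals the set of W-alternating elements of J^d. -/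
open MvPolynomial

noncomputable section

variable (n : ℕ)

/-- The coordinate ring `ℂ[ℂ^{2n}] = ℂ[x_1,…,x_n,y_1,…,y_n]`. -/
abbrev PolyRing (n : ℕ) := MvPolynomial (Fin n ⊕ Fin n) ℂ

/-- The diagonal action of `σ ∈ S_n`, permuting the `x` and the `y` variables
simultaneously. -/
def wAct (σ : Equiv.Perm (Fin n)) : PolyRing n →ₐ[ℂ] PolyRing n :=
  MvPolynomial.rename (Sum.map σ σ)

/-- `f` is `W`-invariant. -/
def IsInv (f : PolyRing n) : Prop := ∀ σ : Equiv.Perm (Fin n), wAct n σ f = f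

/-- `f` is `W`-alternating: `w·f = sign(w)·f` for all `w ∈ W`. -/
def IsAlt (f : PolyRing n) : Prop :=
  ∀ σ : Equiv.Perm (Fin n), wAct n σ f = ((Equiv.Perm.sign σ : ℤ) : ℂ) • f

/-- The space `A¹` of `W`-alternating polynomials, as a `ℂ`-subspace. -/
def altSub : Submodule ℂ (PolyRing n) :=
  ⨅ σ : Equiv.Perm (Fin n),
    Module.End.eigenspace ((wAct n σ).toLinearMap : Module.End ℂ (PolyRing n))
      (((Equiv.Perm.sign σ : ℤ) : ℂ))

/-- The ideal `J¹ = ℂ[ℂ^{2n}]·A¹` generated by the alternating polynomials. -/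
def Jideal : Ideal (PolyRing n) := Ideal.span (altSub n : Set (PolyRing n))

-- sign as a complex scalar
local notation "sgn" σ => ((Equiv.Perm.sign σ : ℤ) : ℂ)

lemma sgn_sq (σ : Equiv.Perm (Fin n)) : ((Equiv.Perm.sign σ : ℤ) : ℂ) ^ 2 = 1 := by
  norm_cast
  rw [Int.units_sq]
  rfl

lemma wAct_wAct (σ τ : Equiv.Perm (Fin n)) (f : PolyRing n) :
    wAct n σ (wAct n τ f) = wAct n (σ * τ) f := by
  simp only [wAct, rename_rename, Sum.map_comp_map]
  rfl

lemma mem_altSub_iff (f : PolyRing n) : f ∈ altSub n ↔ IsAlt n f := by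
  simp [altSub, Submodule.mem_iInf, Module.End.mem_eigenspace_iff, IsAlt]

lemma wAct_pow_mem (d : ℕ) (σ : Equiv.Perm (Fin n)) :
    ∀ f ∈ (altSub n) ^ d, wAct n σ f = (((Equiv.Perm.sign σ : ℤ) : ℂ)) ^ d • f := by
  induction d with
  | zero =>
    intro f hf
    rw [pow_zero, Submodule.one_eq_range] at hf
    obtain ⟨c, rfl⟩ := hf
    simp [Algebra.linearMap_apply]
  | succ d ih =>
    intro f hf
    rw [pow_succ] at hf
    refine Submodule.mul_induction_on hf (fun b hb a ha => ?_) (fun x y hx hy => ?_)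
    · rw [map_mul, ih b hb, (mem_altSub_iff n a).1 ha σ]
      rw [smul_mul_smul_comm, pow_succ]
    · rw [map_add, hx, hy, smul_add]

-- invariant times A^d stays in A^d (d ≥ 1, written d = k+1)
lemma inv_mul_mem (g : PolyRing n) (hg : IsInv n g) (k : ℕ) :
    ∀ x ∈ (altSub n) ^ (k + 1), g * x ∈ (altSub n) ^ (k + 1) := by
  intro x hx
  rw [pow_succ] at hx ⊢
  refine Submodule.mul_induction_on hx (fun b hb a ha => ?_) (fun x y hx hy => ?_)
  · have hga : g * a ∈ altSub n := by
      rw [mem_altSub_iff]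
      intro σ
      rw [map_mul, hg σ, (mem_altSub_iff n a).1 ha σ, mul_smul_comm]
    have := Submodule.mul_mem_mul hb hga
    rwa [show b * (g * a) = g * (b * a) by ring] at this
  · rw [mul_add]
    exact add_mem hx hy

-- J^d as a ℂ-submodule equals ⊤ * A^d
lemma J_eq_top_mul : (Jideal n).restrictScalars ℂ = ⊤ * altSub n := by
  apply le_antisymm
  · intro f hf
    refine Submodule.span_induction (fun a ha => ?_) (zero_mem _) (fun x y _ _ hx hy => add_mem hx hy)
      (fun r x _ hx => ?_) hf
    · simpa using Submodule.mul_mem_mul (Submodule.mem_top (x := (1 : PolyRing n))) ha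
    · rw [smul_eq_mul]
      refine Submodule.mul_induction_on hx (fun p _ a ha => ?_) (fun x y hx hy => ?_)
      · rw [← mul_assoc]
        exact Submodule.mul_mem_mul Submodule.mem_top ha
      · rw [mul_add]; exact add_mem hx hy
  · rw [Submodule.mul_le]
    intro p _ a ha
    exact Ideal.mul_mem_left _ _ (Ideal.subset_span ha)

lemma restrict_mul (I J : Ideal (PolyRing n)) :
    (I * J).restrictScalars ℂ = I.restrictScalars ℂ * J.restrictScalars ℂ := by
  apply le_antisymm
  · intro f hf
    have hf' : f ∈ I * J := hf
    refine Submodule.mul_induction_on hf' (fun x hx y hy => ?_) (fun x y hx hy => add_mem hx hy)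
    exact Submodule.mul_mem_mul (show x ∈ I.restrictScalars ℂ from hx)
      (show y ∈ J.restrictScalars ℂ from hy)
  · rw [Submodule.mul_le]
    intro x hx y hy
    exact Ideal.mul_mem_mul hx hy

lemma top_mul_top :
    (⊤ : Submodule ℂ (PolyRing n)) * ⊤ = ⊤ := by
  apply le_antisymm le_top
  intro x _
  simpa using Submodule.mul_mem_mul (Submodule.mem_top (x := (1:PolyRing n))) (Submodule.mem_top (x := x))

lemma Jpow_eq (d : ℕ) :
    ((Jideal n) ^ d).restrictScalars ℂ = ⊤ * (altSub n) ^ d := by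
  induction d with
  | zero =>
    rw [pow_zero, pow_zero, Ideal.one_eq_top, mul_one, Submodule.restrictScalars_top]
  | succ d ih =>
    rw [pow_succ, restrict_mul, ih, J_eq_top_mul, pow_succ, mul_mul_mul_comm, top_mul_top]

-- averaging operators
def cardC : ℂ := (Fintype.card (Equiv.Perm (Fin n)) : ℂ)

lemma cardC_ne_zero : cardC n ≠ 0 := by
  simp [cardC, Fintype.card_ne_zero]

def avg (d : ℕ) (f : PolyRing n) : PolyRing n :=
  (cardC n)⁻¹ • ∑ σ : Equiv.Perm (Fin n), ((Equiv.Perm.sign σ : ℤ) : ℂ) ^ d • wAct n σ f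

lemma avg_add (d : ℕ) (f g : PolyRing n) : avg n d (f + g) = avg n d f + avg n d g := by
  simp [avg, smul_add, Finset.sum_add_distrib]

lemma sgn_pow_mul_self (d : ℕ) (σ : Equiv.Perm (Fin n)) :
    ((Equiv.Perm.sign σ : ℤ) : ℂ) ^ d * ((Equiv.Perm.sign σ : ℤ) : ℂ) ^ d = 1 := by
  rw [← pow_add, ← two_mul, pow_mul, sgn_sq, one_pow]

lemma avg_of_parity (d : ℕ) (f : PolyRing n)
    (hf : ∀ σ : Equiv.Perm (Fin n), wAct n σ f = ((Equiv.Perm.sign σ : ℤ) : ℂ) ^ d • f) :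
    avg n d f = f := by
  have : ∀ σ : Equiv.Perm (Fin n), ((Equiv.Perm.sign σ : ℤ) : ℂ) ^ d • wAct n σ f = f := by
    intro σ
    rw [hf σ, smul_smul, sgn_pow_mul_self, one_smul]
  rw [avg]
  simp only [this, Finset.sum_const, Finset.card_univ, cardC]
  rw [← Nat.cast_smul_eq_nsmul ℂ, smul_smul]
  rw [show ((Fintype.card (Equiv.Perm (Fin n)) : ℂ))⁻¹ * (Fintype.card (Equiv.Perm (Fin n)) : ℂ) = 1
    from inv_mul_cancel₀ (cardC_ne_zero n), one_smul]

lemma avg_mul (d : ℕ) (p a : PolyRing n)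
    (ha : ∀ σ : Equiv.Perm (Fin n), wAct n σ a = ((Equiv.Perm.sign σ : ℤ) : ℂ) ^ d • a) :
    avg n d (p * a) = avg n 0 p * a := by
  rw [avg, avg, smul_mul_assoc, Finset.sum_mul]
  congr 1
  apply Finset.sum_congr rfl
  intro σ _
  rw [pow_zero, one_smul, map_mul, ha σ, mul_smul_comm, smul_smul, sgn_pow_mul_self, one_smul]

lemma isInv_avg0 (p : PolyRing n) : IsInv n (avg n 0 p) := by
  intro τ
  rw [avg, map_smul, map_sum]
  congr 1
  simp only [pow_zero, one_smul]
  rw [← Equiv.sum_comp (Equiv.mulLeft τ) (fun σ => wAct n σ p)]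
  apply Finset.sum_congr rfl
  intro σ _
  rw [wAct_wAct]
  rfl

lemma avg_mem (d : ℕ) (f : PolyRing n) (hf : f ∈ (⊤ : Submodule ℂ (PolyRing n)) * (altSub n) ^ (d + 1)) :
    avg n (d + 1) f ∈ (altSub n) ^ (d + 1) := by
  refine Submodule.mul_induction_on hf (fun p _ a ha => ?_) (fun x y hx hy => ?_)
  · rw [avg_mul n (d+1) p a (fun σ => wAct_pow_mem n (d+1) σ a ha)]
    exact inv_mul_mem n _ (isInv_avg0 n p) d a ha
  · rw [avg_add]
    exact add_mem hx hy

/-- for `d ≥ 1`, if `d` is even then `A^d = (A¹)^d` is exactly the set of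
`W`-invariant elements of `J^d = (J¹)^d`, and if `d` is odd then `A^d` is exactly the
set of `W`-alternating elements of `J^d`. -/
theorem alt_powers_correct_parity (d : ℕ) (hd : 1 ≤ d) :
    (Even d → ∀ f : PolyRing n,
      f ∈ (altSub n) ^ d ↔ (f ∈ (Jideal n) ^ d ∧ IsInv n f)) ∧
    (Odd d → ∀ f : PolyRing n,
      f ∈ (altSub n) ^ d ↔ (f ∈ (Jideal n) ^ d ∧ IsAlt n f)) := by
  obtain ⟨e, rfl⟩ := Nat.exists_eq_add_of_le hd
  set d := 1 + e with hdset
  have hmemJ : ∀ f : PolyRing n, f ∈ (altSub n) ^ d → f ∈ (Jideal n) ^ d := by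
    intro f hf
    have : f ∈ ((Jideal n) ^ d).restrictScalars ℂ := by
      rw [Jpow_eq]
      simpa using Submodule.mul_mem_mul (Submodule.mem_top (x := (1:PolyRing n))) hf
    exact this
  have hde : d = e + 1 := by omega
  constructor
  · intro hev f
    obtain ⟨k, hk⟩ := hev
    have hsd : ∀ σ : Equiv.Perm (Fin n), ((Equiv.Perm.sign σ : ℤ) : ℂ) ^ d = 1 := by
      intro σ
      rw [hk, ← two_mul, pow_mul, sgn_sq, one_pow]
    constructor
    · intro hf
      refine ⟨hmemJ f hf, fun σ => ?_⟩
      rw [wAct_pow_mem n d σ f hf, hsd, one_smul]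
    · rintro ⟨hfJ, hfi⟩
      have hpar : ∀ σ : Equiv.Perm (Fin n), wAct n σ f = ((Equiv.Perm.sign σ : ℤ) : ℂ) ^ d • f := by
        intro σ; rw [hfi σ, hsd, one_smul]
      have : f ∈ ((Jideal n) ^ d).restrictScalars ℂ := hfJ
      rw [Jpow_eq] at this
      rw [← avg_of_parity n d f hpar, hde]
      exact avg_mem n e f (by rwa [← hde])
  · intro hodd f
    obtain ⟨k, hk⟩ := hodd
    have hsd : ∀ σ : Equiv.Perm (Fin n),
        ((Equiv.Perm.sign σ : ℤ) : ℂ) ^ d = ((Equiv.Perm.sign σ : ℤ) : ℂ) := by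
      intro σ
      rw [hk, pow_add, pow_mul, sgn_sq, one_pow, one_mul, pow_one]
    constructor
    · intro hf
      refine ⟨hmemJ f hf, fun σ => ?_⟩
      rw [wAct_pow_mem n d σ f hf, hsd]
    · rintro ⟨hfJ, hfa⟩
      have hpar : ∀ σ : Equiv.Perm (Fin n), wAct n σ f = ((Equiv.Perm.sign σ : ℤ) : ℂ) ^ d • f := by
        intro σ; rw [hfa σ, hsd]
      have : f ∈ ((Jideal n) ^ d).restrictScalars ℂ := hfJ
      rw [Jpow_eq] at this
      rw [← avg_of_parity n d f hpar, hde]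
      exact avg_mem n e f (by rwa [← hde])


end
end
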